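/- arXiv:2310.16418 — 8 statements merged into one kernel-verified Lean document; each statement's English description precedes it below -/
import Mathlib

section
/- Suppose there are smooth functions X, Z : ℝ → ℝ and an integer k ≥ 1 with (x'(u), z'(u)) = u^k·(X(u), Z(u)) for all u, and set Λ(u) := √(h²·X(u)² + x(u)²·(X(u)² + Z(u)²)). Define ν(u,v) := (1/Λ(u))·(h·X(u)·sin v − x(u)·Z(u)·cos v, −h·X(u)·cos v − x(u)·Z(u)·sin v, x(u)·X(u)). Then at every (u,v) with Λ(u) > 0: ν·f_u = 0, ν·f_v = 0 and ‖ν(u,v)‖ = 1. Moreover, if x(0) ≠ 0 and Λ(0) > 0, then for every v the limiting normal curvature of f at (0,v), namely f_{vv}(0,v)·ν(0,v)/‖f_v(0,v)‖², equals x(0)²·Z(0)/((x(0)² + h²)·Λ(0)). -/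
noncomputable section

open Real

/-- Dot product on `ℝ³ = Fin 3 → ℝ`. -/
def dot3 (a b : Fin 3 → ℝ) : ℝ := a 0 * b 0 + a 1 * b 1 + a 2 * b 2

/-- Euclidean norm on `ℝ³ = Fin 3 → ℝ`. -/
def norm3 (a : Fin 3 → ℝ) : ℝ := Real.sqrt (dot3 a a)

/-- The helicoidal surface `f(u,v) = (x(u) cos v, x(u) sin v, z(u) + h v)`. -/
def heli (x z : ℝ → ℝ) (h : ℝ) (u v : ℝ) : Fin 3 → ℝ :=
  ![x u * Real.cos v, x u * Real.sin v, z u + h * v]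

/-- `Λ(u) = √(h² X(u)² + x(u)² (X(u)² + Z(u)²))`. -/
def Lam (x X Z : ℝ → ℝ) (h : ℝ) (u : ℝ) : ℝ :=
  Real.sqrt (h ^ 2 * X u ^ 2 + x u ^ 2 * (X u ^ 2 + Z u ^ 2))

/-- The unit normal vector field `ν` of the helicoidal surface. -/
def nuHeli (x X Z : ℝ → ℝ) (h : ℝ) (u v : ℝ) : Fin 3 → ℝ :=
  (1 / Lam x X Z h u) •
    ![h * X u * Real.sin v - x u * Z u * Real.cos v,
      -(h * X u * Real.cos v) - x u * Z u * Real.sin v,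
      x u * X u]

lemma heli_du (x z : ℝ → ℝ) (h : ℝ) (hx : ContDiff ℝ (⊤ : ℕ∞) x) (hz : ContDiff ℝ (⊤ : ℕ∞) z)
    (u v : ℝ) :
    HasDerivAt (fun w => heli x z h w v)
      ![deriv x u * Real.cos v, deriv x u * Real.sin v, deriv z u] u := by
  apply hasDerivAt_pi.2
  intro i
  have hx' := (hx.differentiable (by simp) u).hasDerivAt
  have hz' := (hz.differentiable (by simp) u).hasDerivAt
  fin_cases i <;> simp [heli]
  · exact hx'.mul_const _
  · exact hx'.mul_const _
  · exact hz'.differentiableAt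

lemma heli_dv (x z : ℝ → ℝ) (h : ℝ) (u v : ℝ) :
    HasDerivAt (fun w => heli x z h u w)
      ![-(x u * Real.sin v), x u * Real.cos v, h] v := by
  apply hasDerivAt_pi.2
  intro i
  fin_cases i <;> simp [heli]
  · simpa [mul_comm] using ((Real.hasDerivAt_cos v).const_mul (x u))
  · simpa [mul_comm] using ((Real.hasDerivAt_sin v).const_mul (x u))
  · simpa using ((hasDerivAt_id v).const_mul h).const_add (z u)

lemma heli_deriv_v (x z : ℝ → ℝ) (h : ℝ) (u : ℝ) :
    deriv (fun w => heli x z h u w)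
      = fun v => ![-(x u * Real.sin v), x u * Real.cos v, h] := by
  funext v
  exact (heli_dv x z h u v).deriv

lemma heli_dvv (x z : ℝ → ℝ) (h : ℝ) (u v : ℝ) :
    iteratedDeriv 2 (fun w => heli x z h u w) v
      = ![-(x u * Real.cos v), -(x u * Real.sin v), 0] := by
  have : iteratedDeriv 2 (fun w => heli x z h u w) v
      = deriv (deriv (fun w => heli x z h u w)) v := by
    rw [show (2:ℕ) = 1 + 1 from rfl, iteratedDeriv_succ, iteratedDeriv_one]
  rw [this, heli_deriv_v]
  refine HasDerivAt.deriv ?_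
  apply hasDerivAt_pi.2
  intro i
  fin_cases i <;> simp
  · simpa [mul_comm, neg_mul, Pi.neg_def] using (((Real.hasDerivAt_sin v).const_mul (x u)).neg)
  · simpa [mul_comm] using ((Real.hasDerivAt_cos v).const_mul (x u))
  · exact hasDerivAt_const v h

/-- If `(x'(u), z'(u)) = u^k (X(u), Z(u))`, then `ν` is a unit normal vector field along the
helicoidal surface `f` wherever `Λ > 0`, and if `x(0) ≠ 0` and `Λ(0) > 0`, the limiting normal
curvature of `f` at `(0,v)` equals `x(0)² Z(0) / ((x(0)² + h²) Λ(0))`. -/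
theorem stmt1 (x z X Z : ℝ → ℝ) (h : ℝ) (k : ℤ) (hk : 1 ≤ k)
    (hx : ContDiff ℝ (⊤ : ℕ∞) x) (hz : ContDiff ℝ (⊤ : ℕ∞) z)
    (hX : ContDiff ℝ (⊤ : ℕ∞) X) (hZ : ContDiff ℝ (⊤ : ℕ∞) Z)
    (hfac : ∀ u : ℝ, deriv x u = u ^ k * X u ∧ deriv z u = u ^ k * Z u) :
    (∀ u v : ℝ, 0 < Lam x X Z h u →
      dot3 (nuHeli x X Z h u v) (deriv (fun w => heli x z h w v) u) = 0
      ∧ dot3 (nuHeli x X Z h u v) (deriv (fun w => heli x z h u w) v) = 0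
      ∧ norm3 (nuHeli x X Z h u v) = 1)
    ∧ (x 0 ≠ 0 → 0 < Lam x X Z h 0 → ∀ v : ℝ,
        dot3 (iteratedDeriv 2 (fun w => heli x z h 0 w) v) (nuHeli x X Z h 0 v)
            / norm3 (deriv (fun w => heli x z h 0 w) v) ^ 2
          = x 0 ^ 2 * Z 0 / ((x 0 ^ 2 + h ^ 2) * Lam x X Z h 0)) := by
  have pyth : ∀ v : ℝ, Real.sin v ^ 2 + Real.cos v ^ 2 = 1 := fun v => Real.sin_sq_add_cos_sq v
  constructor
  · intro u v hL
    have hLne : Lam x X Z h u ≠ 0 := ne_of_gt hL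
    have hE : h ^ 2 * X u ^ 2 + x u ^ 2 * (X u ^ 2 + Z u ^ 2) = Lam x X Z h u ^ 2 := by
      rw [Lam] at hL ⊢
      rw [Real.sq_sqrt]
      nlinarith [Real.sqrt_nonneg (h ^ 2 * X u ^ 2 + x u ^ 2 * (X u ^ 2 + Z u ^ 2)),
        Real.sqrt_eq_zero' (x := h ^ 2 * X u ^ 2 + x u ^ 2 * (X u ^ 2 + Z u ^ 2)),
        sq_nonneg (h * X u), sq_nonneg (x u * X u), sq_nonneg (x u * Z u)]
    refine ⟨?_, ?_, ?_⟩
    · rw [(heli_du x z h hx hz u v).deriv, (hfac u).1, (hfac u).2]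
      have e1 : dot3 (nuHeli x X Z h u v)
          ![u ^ k * X u * Real.cos v, u ^ k * X u * Real.sin v, u ^ k * Z u]
          = (1 / Lam x X Z h u) *
            ((-(x u * Z u * u ^ k * X u)) * (Real.sin v ^ 2 + Real.cos v ^ 2)
              + x u * Z u * u ^ k * X u) := by
        simp only [dot3, nuHeli, Pi.smul_apply, smul_eq_mul, Matrix.cons_val_zero,
          Matrix.cons_val_one, Matrix.head_cons, Matrix.cons_val_two, Matrix.tail_cons]
        ring
      rw [e1, pyth v]; ring
    · rw [(heli_dv x z h u v).deriv]
      have e2 : dot3 (nuHeli x X Z h u v) ![-(x u * Real.sin v), x u * Real.cos v, h]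
          = (1 / Lam x X Z h u) *
            ((-(x u * h * X u)) * (Real.sin v ^ 2 + Real.cos v ^ 2) + x u * h * X u) := by
        simp only [dot3, nuHeli, Pi.smul_apply, smul_eq_mul, Matrix.cons_val_zero,
          Matrix.cons_val_one, Matrix.head_cons, Matrix.cons_val_two, Matrix.tail_cons]
        ring
      rw [e2, pyth v]; ring
    · rw [norm3]
      have : dot3 (nuHeli x X Z h u v) (nuHeli x X Z h u v) = 1 := by
        simp only [dot3, nuHeli, Pi.smul_apply, smul_eq_mul]
        simp only [Matrix.cons_val_zero, Matrix.cons_val_one, Matrix.head_cons,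
          Matrix.cons_val_two, Matrix.tail_cons]
        have : (h * X u * Real.sin v - x u * Z u * Real.cos v) ^ 2
            + (-(h * X u * Real.cos v) - x u * Z u * Real.sin v) ^ 2
            + (x u * X u) ^ 2 = Lam x X Z h u ^ 2 := by
          rw [← hE]; nlinarith [pyth v]
        field_simp
        nlinarith [this]
      rw [this, Real.sqrt_one]
  · intro hx0 hL v
    have hLne : Lam x X Z h 0 ≠ 0 := ne_of_gt hL
    rw [heli_dvv, heli_deriv_v]
    have hnorm : norm3 ![-(x 0 * Real.sin v), x 0 * Real.cos v, h] ^ 2 = x 0 ^ 2 + h ^ 2 := by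
      rw [norm3, Real.sq_sqrt]
      · simp [dot3]; nlinarith [pyth v]
      · simp [dot3]; nlinarith [pyth v, sq_nonneg (x 0 * Real.sin v), sq_nonneg (x 0 * Real.cos v), sq_nonneg h]
    rw [hnorm]
    have hdot : dot3 ![-(x 0 * Real.cos v), -(x 0 * Real.sin v), 0] (nuHeli x X Z h 0 v)
        = x 0 ^ 2 * Z 0 / Lam x X Z h 0 := by
      have e3 : dot3 ![-(x 0 * Real.cos v), -(x 0 * Real.sin v), 0] (nuHeli x X Z h 0 v)
          = (1 / Lam x X Z h 0) * (x 0 ^ 2 * Z 0 * (Real.sin v ^ 2 + Real.cos v ^ 2)) := by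
        simp only [dot3, nuHeli, Pi.smul_apply, smul_eq_mul, Matrix.cons_val_zero,
          Matrix.cons_val_one, Matrix.head_cons, Matrix.cons_val_two, Matrix.tail_cons]
        ring
      rw [e3, pyth v]; ring
    rw [hdot, div_div, mul_comm (Lam x X Z h 0)]

end
end

section
/- Assume x(u)² + h² > 0 for all u, fix u₀ ∈ ℝ, and set φ(u) := h·∫_{u₀}^{u} z'(ζ)/(x(ζ)² + h²) dζ. Define f̃(u,t) := f(u, t − φ(u)). Then for all (u,t): f̃_u(u,t)·f̃_t(u,t) = 0 and ‖f̃_t(u,t)‖² = x(u)² + h². -/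
noncomputable section

open Real

/-- `φ(u) = h ∫_{u₀}^u z'(ζ)/(x(ζ)² + h²) dζ`. -/
def phiHeli (x z : ℝ → ℝ) (h u₀ : ℝ) (u : ℝ) : ℝ :=
  h * ∫ ζ in u₀..u, deriv z ζ / (x ζ ^ 2 + h ^ 2)

/-- `f̃(u,t) = f(u, t − φ(u))`. -/
def heliTilde (x z : ℝ → ℝ) (h u₀ : ℝ) (u t : ℝ) : Fin 3 → ℝ :=
  heli x z h u (t - phiHeli x z h u₀ u)

/-- If `x(u)² + h² > 0` for all `u`, then the reparametrized helicoidal surface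
`f̃(u,t) := f(u, t − φ(u))` satisfies `f̃_u · f̃_t = 0` and `‖f̃_t‖² = x(u)² + h²`. -/
theorem stmt2 (x z : ℝ → ℝ) (h u₀ : ℝ)
    (hx : ContDiff ℝ (⊤ : ℕ∞) x) (hz : ContDiff ℝ (⊤ : ℕ∞) z)
    (hpos : ∀ u : ℝ, 0 < x u ^ 2 + h ^ 2) :
    ∀ u t : ℝ,
      dot3 (deriv (fun w => heliTilde x z h u₀ w t) u)
          (deriv (fun w => heliTilde x z h u₀ u w) t) = 0
      ∧ norm3 (deriv (fun w => heliTilde x z h u₀ u w) t) ^ 2 = x u ^ 2 + h ^ 2 := by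
  intro u t
  have hcont : Continuous (fun ζ => deriv z ζ / (x ζ ^ 2 + h ^ 2)) :=
    (hz.continuous_deriv (by simp)).div
      ((hx.continuous.pow 2).add continuous_const) (fun ζ => (hpos ζ).ne')
  set φ' : ℝ := h * (deriv z u / (x u ^ 2 + h ^ 2)) with hφ'def
  have hφ : HasDerivAt (phiHeli x z h u₀) φ' u := by
    have hI : HasDerivAt (fun u => ∫ ζ in u₀..u, deriv z ζ / (x ζ ^ 2 + h ^ 2))
        (deriv z u / (x u ^ 2 + h ^ 2)) u :=
      intervalIntegral.integral_hasDerivAt_right (hcont.intervalIntegrable _ _)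
        (hcont.stronglyMeasurableAtFilter _ _) hcont.continuousAt
    exact hI.const_mul h
  set θ : ℝ := t - phiHeli x z h u₀ u with hθdef
  have hθ : HasDerivAt (fun w => t - phiHeli x z h u₀ w) (-φ') u := hφ.const_sub t
  have hxu : HasDerivAt x (deriv x u) u := (hx.differentiable (by simp) u).hasDerivAt
  have hzu : HasDerivAt z (deriv z u) u := (hz.differentiable (by simp) u).hasDerivAt
  -- partial derivative in u
  have hU : HasDerivAt (fun w => heliTilde x z h u₀ w t)
      (![deriv x u * Real.cos θ + x u * (Real.sin θ * φ'),
         deriv x u * Real.sin θ - x u * (Real.cos θ * φ'),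
         deriv z u - h * φ']) u := by
    rw [hasDerivAt_pi]
    intro i
    fin_cases i
    · have : HasDerivAt (fun w => x w * Real.cos (t - phiHeli x z h u₀ w))
          (deriv x u * Real.cos θ + x u * (-Real.sin θ * (-φ'))) u :=
        hxu.mul (hθ.cos)
      simpa [heliTilde, heli, mul_comm, mul_assoc, mul_left_comm] using this
    · have : HasDerivAt (fun w => x w * Real.sin (t - phiHeli x z h u₀ w))
          (deriv x u * Real.sin θ + x u * (Real.cos θ * (-φ'))) u :=
        hxu.mul (hθ.sin)
      have e : deriv x u * Real.sin θ + x u * (Real.cos θ * (-φ')) =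
          deriv x u * Real.sin θ - x u * (Real.cos θ * φ') := by ring
      rw [e] at this
      simpa [heliTilde, heli] using this
    · have : HasDerivAt (fun w => z w + h * (t - phiHeli x z h u₀ w))
          (deriv z u + h * (-φ')) u := hzu.add (hθ.const_mul h)
      have e : deriv z u + h * (-φ') = deriv z u - h * φ' := by ring
      rw [e] at this
      simpa [heliTilde, heli] using this
  -- partial derivative in t
  have hT : HasDerivAt (fun w => heliTilde x z h u₀ u w)
      (![-(x u * Real.sin θ), x u * Real.cos θ, h]) t := by
    rw [hasDerivAt_pi]
    intro i
    have hs : HasDerivAt (fun w : ℝ => w - phiHeli x z h u₀ u) 1 t := by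
      simpa using (hasDerivAt_id t).sub_const (phiHeli x z h u₀ u)
    fin_cases i
    · have : HasDerivAt (fun w => x u * Real.cos (w - phiHeli x z h u₀ u))
          (x u * (-Real.sin θ * 1)) t := (hs.cos).const_mul (x u)
      have e : x u * (-Real.sin θ * 1) = -(x u * Real.sin θ) := by ring
      rw [e] at this
      simpa [heliTilde, heli] using this
    · have : HasDerivAt (fun w => x u * Real.sin (w - phiHeli x z h u₀ u))
          (x u * (Real.cos θ * 1)) t := (hs.sin).const_mul (x u)
      have e : x u * (Real.cos θ * 1) = x u * Real.cos θ := by ring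
      rw [e] at this
      simpa [heliTilde, heli] using this
    · have : HasDerivAt (fun w => z u + h * (w - phiHeli x z h u₀ u))
          (h * 1) t := ((hs.const_mul h).const_add (z u))
      rw [mul_one] at this
      simpa [heliTilde, heli] using this
  clear_value θ φ'
  rw [hU.deriv, hT.deriv]
  have hne : x u ^ 2 + h ^ 2 ≠ 0 := (hpos u).ne'
  constructor
  · simp only [dot3, Matrix.cons_val_zero, Matrix.cons_val_one, Matrix.head_cons,
      Matrix.cons_val_two, Matrix.tail_cons]
    have hsc : Real.sin θ ^ 2 + Real.cos θ ^ 2 = 1 := Real.sin_sq_add_cos_sq θ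
    have key : (deriv x u * Real.cos θ + x u * (Real.sin θ * φ')) * (-(x u * Real.sin θ))
        + (deriv x u * Real.sin θ - x u * (Real.cos θ * φ')) * (x u * Real.cos θ)
        + (deriv z u - h * φ') * h
        = -(x u ^ 2) * φ' * (Real.sin θ ^ 2 + Real.cos θ ^ 2 - 1)
          - ((x u ^ 2 + h ^ 2) * φ' - h * deriv z u) := by ring
    rw [key, hsc]
    have e2 : (x u ^ 2 + h ^ 2) * φ' = h * deriv z u := by
      rw [hφ'def]; field_simp
    rw [e2]; ring
  · simp only [norm3, dot3, Matrix.cons_val_zero, Matrix.cons_val_one, Matrix.head_cons,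
      Matrix.cons_val_two, Matrix.tail_cons]
    have key : (-(x u * Real.sin θ)) * (-(x u * Real.sin θ)) + x u * Real.cos θ * (x u * Real.cos θ)
        + h * h = x u ^ 2 * (Real.sin θ ^ 2 + Real.cos θ ^ 2) + h ^ 2 := by ring
    rw [key, Real.sin_sq_add_cos_sq, mul_one, Real.sq_sqrt (hpos u).le]
end
end

section
/- For all (s,t) ∈ J × ℝ: Ψ_s(s,t)·Ψ_s(s,t) = s^{2k}, Ψ_s(s,t)·Ψ_t(s,t) = 0, and Ψ_t(s,t)·Ψ_t(s,t) = U(s)². In other words, the first fundamental form of Ψ is s^{2k} ds² + U(s)² dt². -/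
noncomputable section

open Real

/-- Cross product on `ℝ³ = Fin 3 → ℝ`. -/
def cross3 (a b : Fin 3 → ℝ) : Fin 3 → ℝ :=
  ![a 1 * b 2 - a 2 * b 1, a 2 * b 0 - a 0 * b 2, a 0 * b 1 - a 1 * b 0]

/-- Determinant of the 3×3 matrix with columns `a`, `b`, `c`. -/
def det3 (a b c : Fin 3 → ℝ) : ℝ :=
  a 0 * (b 1 * c 2 - b 2 * c 1) - b 0 * (a 1 * c 2 - a 2 * c 1) + c 0 * (a 1 * b 2 - a 2 * b 1)

/-- `ρ(s) = √(m²U(s)² − h² − m⁴U(s)²V(s)²)`. -/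
def rhoB (U V : ℝ → ℝ) (m h : ℝ) (s : ℝ) : ℝ :=
  Real.sqrt (m ^ 2 * U s ^ 2 - h ^ 2 - m ^ 4 * U s ^ 2 * V s ^ 2)

/-- `x(s) = ε₀ √(m²U(s)² − h²)`. -/
def xB (U : ℝ → ℝ) (m h ε₀ : ℝ) (s : ℝ) : ℝ :=
  ε₀ * Real.sqrt (m ^ 2 * U s ^ 2 - h ^ 2)

/-- `z(s) = ε₂ m ∫₀^s ζ^k U(ζ) ρ(ζ)/(m²U(ζ)² − h²) dζ`. -/
def zB (U V : ℝ → ℝ) (k : ℕ) (m h ε₂ : ℝ) (s : ℝ) : ℝ :=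
  ε₂ * m * ∫ ζ in (0:ℝ)..s, ζ ^ k * U ζ * rhoB U V m h ζ / (m ^ 2 * U ζ ^ 2 - h ^ 2)

/-- `θ(s,t) = (1/m)(ε₁ t − ε₂ h ∫₀^s ζ^k ρ(ζ)/(U(ζ)(m²U(ζ)² − h²)) dζ)`. -/
def thetaB (U V : ℝ → ℝ) (k : ℕ) (m h ε₁ ε₂ : ℝ) (s t : ℝ) : ℝ :=
  (1 / m) * (ε₁ * t -
    ε₂ * h * ∫ ζ in (0:ℝ)..s, ζ ^ k * rhoB U V m h ζ / (U ζ * (m ^ 2 * U ζ ^ 2 - h ^ 2)))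

/-- The generic helicoidal `(k+1)`-type edge
`Ψ(s,t) = (x(s) cos θ(s,t), x(s) sin θ(s,t), z(s) + h θ(s,t))` of Bour's representation. -/
def PsiB (U V : ℝ → ℝ) (k : ℕ) (m h ε₀ ε₁ ε₂ : ℝ) (s t : ℝ) : Fin 3 → ℝ :=
  ![xB U m h ε₀ s * Real.cos (thetaB U V k m h ε₁ ε₂ s t),
    xB U m h ε₀ s * Real.sin (thetaB U V k m h ε₁ ε₂ s t),
    zB U V k m h ε₂ s + h * thetaB U V k m h ε₁ ε₂ s t]

/-- Fundamental theorem of calculus helper on a convex open set containing `0`. -/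
private lemma ftc_aux {J : Set ℝ} (hJo : IsOpen J) (hJc : Convex ℝ J) (hJ0 : (0:ℝ) ∈ J)
    {f : ℝ → ℝ} (hf : ContinuousOn f J) {s : ℝ} (hs : s ∈ J) :
    HasDerivAt (fun x => ∫ ζ in (0:ℝ)..x, f ζ) (f s) s := by
  have hsub : Set.uIcc (0:ℝ) s ⊆ J := (hJc.ordConnected).uIcc_subset hJ0 hs
  exact intervalIntegral.integral_hasDerivAt_right
    ((hf.mono hsub).intervalIntegrable)
    (hf.stronglyMeasurableAtFilter hJo s hs)
    (hf.continuousAt (hJo.mem_nhds hs))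

private lemma alg1 (m h u v q sa r co si e0 e2 : ℝ) (hm : m ≠ 0) (hu : u ≠ 0) (hsa : sa ≠ 0)
    (hAne : m^2*u^2-h^2 ≠ 0)
    (hA : sa^2 = m^2*u^2-h^2) (hr : r^2 = m^2*u^2-h^2 - m^4*u^2*v^2)
    (he0 : e0^2 = 1) (he2 : e2^2 = 1) (htrig : si^2+co^2 = 1) :
    (e0 * (m^2*(2*u^1*(q*v))/(2*sa)) * co + (e0*sa) * (-si * (1/m * -(e2*h*(q*r/(u*(m^2*u^2-h^2)))))))^2
    + (e0 * (m^2*(2*u^1*(q*v))/(2*sa)) * si + (e0*sa) * (co * (1/m * -(e2*h*(q*r/(u*(m^2*u^2-h^2)))))))^2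
    + (e2*m*(q*u*r/(m^2*u^2-h^2)) + h * (1/m * -(e2*h*(q*r/(u*(m^2*u^2-h^2))))))^2 = q^2 := by
  have key : ∀ X Y Z : ℝ, (X*co + (e0*sa)*(-si*Z))^2 + (X*si + (e0*sa)*(co*Z))^2 + Y^2
      = X^2 + sa^2*Z^2 + Y^2 := by
    intro X Y Z
    have h' : e0^2*(si^2+co^2) = 1 := by rw [htrig, he0]; ring
    nlinarith [h', sq_nonneg X]
  rw [key]
  have hX : (e0 * (m^2*(2*u^1*(q*v))/(2*sa)))^2 = e0^2 * (m^4*u^2*q^2*v^2) / sa^2 := by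
    field_simp
  have hZ : sa^2*(1/m * -(e2*h*(q*r/(u*(m^2*u^2-h^2)))))^2
      = sa^2 * e2^2*h^2*q^2*r^2/(m^2*u^2*(m^2*u^2-h^2)^2) := by
    field_simp
  have hY : e2*m*(q*u*r/(m^2*u^2-h^2)) + h * (1/m * -(e2*h*(q*r/(u*(m^2*u^2-h^2)))))
      = e2*q*r/(m*u) := by
    field_simp; ring
  rw [hX, hZ, hY, div_pow, mul_pow, mul_pow, mul_pow, he0, he2, hA, hr]
  field_simp
  ring

private lemma alg2 (m h u v q sa r co si e0 e1 e2 : ℝ) (hm : m ≠ 0) (hu : u ≠ 0) (hsa : sa ≠ 0)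
    (hAne : m^2*u^2-h^2 ≠ 0)
    (hA : sa^2 = m^2*u^2-h^2)
    (he0 : e0^2 = 1) (htrig : si^2+co^2 = 1) :
    (e0 * (m^2*(2*u^1*(q*v))/(2*sa)) * co + (e0*sa) * (-si * (1/m * -(e2*h*(q*r/(u*(m^2*u^2-h^2)))))))
        * ((e0*sa) * (-si * (1/m*(e1*1))))
    + (e0 * (m^2*(2*u^1*(q*v))/(2*sa)) * si + (e0*sa) * (co * (1/m * -(e2*h*(q*r/(u*(m^2*u^2-h^2)))))))
        * ((e0*sa) * (co * (1/m*(e1*1))))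
    + (e2*m*(q*u*r/(m^2*u^2-h^2)) + h * (1/m * -(e2*h*(q*r/(u*(m^2*u^2-h^2))))))
        * (h * (1/m*(e1*1))) = 0 := by
  have key2 : ∀ X Z W Y : ℝ,
      (X*co + (e0*sa)*(-si*Z))*((e0*sa)*(-si*W)) + (X*si + (e0*sa)*(co*Z))*((e0*sa)*(co*W))
        + (Y + h*Z)*(h*W) = W*(sa^2*Z + h*Y + h^2*Z) := by
    intro X Z W Y
    linear_combination (sa^2*Z*W*e0^2)*htrig + (sa^2*Z*W)*he0
  rw [key2, hA]
  field_simp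
  ring

private lemma alg3 (m h u sa co si e0 e1 : ℝ) (hm : m ≠ 0) (hsa : sa ≠ 0)
    (hA : sa^2 = m^2*u^2-h^2)
    (he0 : e0^2 = 1) (he1 : e1^2 = 1) (htrig : si^2+co^2 = 1) :
    ((e0*sa) * (-si * (1/m*(e1*1))))^2 + ((e0*sa) * (co * (1/m*(e1*1))))^2
      + (h * (1/m*(e1*1)))^2 = u^2 := by
  field_simp
  linear_combination (e0^2*sa^2*e1^2)*htrig + (sa^2*e1^2)*he0 + (sa^2+h^2)*he1 + hA

/-- The first fundamental form of `Ψ` is `s^{2k} ds² + U(s)² dt²`: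
`Ψ_s·Ψ_s = s^{2k}`, `Ψ_s·Ψ_t = 0`, `Ψ_t·Ψ_t = U(s)²`. -/
theorem stmt3 (k : ℕ) (hk : 1 ≤ k)
    (J : Set ℝ) (hJo : IsOpen J) (hJc : Convex ℝ J) (hJ0 : (0:ℝ) ∈ J)
    (U V : ℝ → ℝ) (hU : ContDiff ℝ (⊤ : ℕ∞) U) (hV : ContDiff ℝ (⊤ : ℕ∞) V)
    (hUpos : ∀ s ∈ J, 0 < U s) (hU' : ∀ s ∈ J, deriv U s = s ^ k * V s)
    (m h : ℝ) (hm : 0 < m)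
    (h1 : ∀ s ∈ J, 0 < m ^ 2 * U s ^ 2 - h ^ 2)
    (h2 : ∀ s ∈ J, 0 < m ^ 2 * U s ^ 2 - h ^ 2 - m ^ 4 * U s ^ 2 * V s ^ 2)
    (ε₀ ε₁ ε₂ : ℝ) (he0 : ε₀ = 1 ∨ ε₀ = -1) (he1 : ε₁ = 1 ∨ ε₁ = -1)
    (he2 : ε₂ = 1 ∨ ε₂ = -1) :
    ∀ s ∈ J, ∀ t : ℝ,
      dot3 (deriv (fun s' => PsiB U V k m h ε₀ ε₁ ε₂ s' t) s)
          (deriv (fun s' => PsiB U V k m h ε₀ ε₁ ε₂ s' t) s) = s ^ (2 * k)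
      ∧ dot3 (deriv (fun s' => PsiB U V k m h ε₀ ε₁ ε₂ s' t) s)
          (deriv (fun t' => PsiB U V k m h ε₀ ε₁ ε₂ s t') t) = 0
      ∧ dot3 (deriv (fun t' => PsiB U V k m h ε₀ ε₁ ε₂ s t') t)
          (deriv (fun t' => PsiB U V k m h ε₀ ε₁ ε₂ s t') t) = U s ^ 2 := by
  intro s hs t
  have hA : 0 < m ^ 2 * U s ^ 2 - h ^ 2 := h1 s hs
  have hAne : m ^ 2 * U s ^ 2 - h ^ 2 ≠ 0 := ne_of_gt hA
  have hU0 : 0 < U s := hUpos s hs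
  have hUne : U s ≠ 0 := ne_of_gt hU0
  have hm0 : m ≠ 0 := ne_of_gt hm
  have hUc : Continuous U := hU.continuous
  have hVc : Continuous V := hV.continuous
  have hRc : Continuous (rhoB U V m h) := by unfold rhoB; fun_prop
  have hcont1 : ContinuousOn
      (fun ζ => ζ ^ k * U ζ * rhoB U V m h ζ / (m ^ 2 * U ζ ^ 2 - h ^ 2)) J := by
    apply ContinuousOn.div
    · fun_prop
    · fun_prop
    · intro ζ hζ; exact ne_of_gt (h1 ζ hζ)
  have hcont2 : ContinuousOn
      (fun ζ => ζ ^ k * rhoB U V m h ζ / (U ζ * (m ^ 2 * U ζ ^ 2 - h ^ 2))) J := by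
    apply ContinuousOn.div
    · fun_prop
    · fun_prop
    · intro ζ hζ; exact mul_ne_zero (ne_of_gt (hUpos ζ hζ)) (ne_of_gt (h1 ζ hζ))
  have hUd : HasDerivAt U (s ^ k * V s) s := by
    have hd := (hU.differentiable (by simp)).differentiableAt (x := s)
    have h0 := hd.hasDerivAt
    rwa [hU' s hs] at h0
  -- notation
  set SA := Real.sqrt (m ^ 2 * U s ^ 2 - h ^ 2) with hSAdef
  set R := rhoB U V m h s with hRdef
  set θ := thetaB U V k m h ε₁ ε₂ s t with hθdef
  have hSA2 : SA ^ 2 = m ^ 2 * U s ^ 2 - h ^ 2 := Real.sq_sqrt hA.le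
  have hSAne : SA ≠ 0 := ne_of_gt (Real.sqrt_pos.mpr hA)
  have hR2 : R ^ 2 = m ^ 2 * U s ^ 2 - h ^ 2 - m ^ 4 * U s ^ 2 * V s ^ 2 :=
    Real.sq_sqrt (h2 s hs).le
  have he0' : ε₀ ^ 2 = 1 := by rcases he0 with h' | h' <;> rw [h'] <;> norm_num
  have he1' : ε₁ ^ 2 = 1 := by rcases he1 with h' | h' <;> rw [h'] <;> norm_num
  have he2' : ε₂ ^ 2 = 1 := by rcases he2 with h' | h' <;> rw [h'] <;> norm_num
  have htrig : Real.sin θ ^ 2 + Real.cos θ ^ 2 = 1 := Real.sin_sq_add_cos_sq θ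
  -- derivatives in s
  have hxd : HasDerivAt (fun s' => xB U m h ε₀ s')
      (ε₀ * (m ^ 2 * (2 * U s ^ 1 * (s ^ k * V s)) / (2 * SA))) s := by
    have hfd : HasDerivAt (fun s' => m ^ 2 * U s' ^ 2 - h ^ 2)
        (m ^ 2 * (2 * U s ^ 1 * (s ^ k * V s))) s := ((hUd.pow 2).const_mul _).sub_const _
    unfold xB
    exact (hfd.sqrt hAne).const_mul ε₀
  have hzd : HasDerivAt (fun s' => zB U V k m h ε₂ s')
      (ε₂ * m * (s ^ k * U s * R / (m ^ 2 * U s ^ 2 - h ^ 2))) s := by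
    unfold zB
    exact (ftc_aux hJo hJc hJ0 hcont1 hs).const_mul (ε₂ * m)
  have hθsd : HasDerivAt (fun s' => thetaB U V k m h ε₁ ε₂ s' t)
      (1 / m * -(ε₂ * h * (s ^ k * R / (U s * (m ^ 2 * U s ^ 2 - h ^ 2))))) s := by
    unfold thetaB
    exact (((ftc_aux hJo hJc hJ0 hcont2 hs).const_mul (ε₂ * h)).const_sub (ε₁ * t)).const_mul (1 / m)
  -- derivative in t
  have hθtd : HasDerivAt (fun t' => thetaB U V k m h ε₁ ε₂ s t')
      (1 / m * (ε₁ * 1)) t := by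
    unfold thetaB
    exact (((hasDerivAt_id' (𝕜 := ℝ) t).const_mul ε₁).sub_const _).const_mul (1 / m)
  -- abbreviations for derivative values
  set x' : ℝ := ε₀ * (m ^ 2 * (2 * U s ^ 1 * (s ^ k * V s)) / (2 * SA)) with hx'def
  set z' : ℝ := ε₂ * m * (s ^ k * U s * R / (m ^ 2 * U s ^ 2 - h ^ 2)) with hz'def
  set θs : ℝ := 1 / m * -(ε₂ * h * (s ^ k * R / (U s * (m ^ 2 * U s ^ 2 - h ^ 2)))) with hθsdef
  set θt : ℝ := 1 / m * (ε₁ * 1) with hθtdef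
  have hxBval : xB U m h ε₀ s = ε₀ * SA := rfl
  -- full derivative vectors
  have hΨs : HasDerivAt (fun s' => PsiB U V k m h ε₀ ε₁ ε₂ s' t)
      (![x' * Real.cos θ + xB U m h ε₀ s * (-Real.sin θ * θs),
         x' * Real.sin θ + xB U m h ε₀ s * (Real.cos θ * θs),
         z' + h * θs]) s := by
    apply hasDerivAt_pi.2
    intro i
    fin_cases i
    · have := hxd.mul hθsd.cos
      exact this
    · have := hxd.mul hθsd.sin
      exact this
    · have := hzd.add (hθsd.const_mul h)
      exact this
  have hΨt : HasDerivAt (fun t' => PsiB U V k m h ε₀ ε₁ ε₂ s t')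
      (![xB U m h ε₀ s * (-Real.sin θ * θt),
         xB U m h ε₀ s * (Real.cos θ * θt),
         h * θt]) t := by
    apply hasDerivAt_pi.2
    intro i
    fin_cases i
    · have := hθtd.cos.const_mul (xB U m h ε₀ s)
      simpa [PsiB, mul_comm, mul_left_comm] using this
    · have := hθtd.sin.const_mul (xB U m h ε₀ s)
      simpa [PsiB, mul_comm, mul_left_comm] using this
    · have := (hθtd.const_mul h).const_add (zB U V k m h ε₂ s)
      simpa [PsiB] using this
  rw [hΨs.deriv, hΨt.deriv]
  simp only [dot3, Matrix.cons_val_zero, Matrix.cons_val_one, Matrix.head_cons,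
    Matrix.cons_val_two, Matrix.tail_cons]
  rw [hxBval, hx'def, hz'def, hθsdef, hθtdef]
  refine ⟨?_, ?_, ?_⟩
  · have := alg1 m h (U s) (V s) (s ^ k) SA R (Real.cos θ) (Real.sin θ) ε₀ ε₂
      hm0 hUne hSAne hAne hSA2 hR2 he0' he2' htrig
    rw [mul_comm 2 k, pow_mul]
    linear_combination this
  · have := alg2 m h (U s) (V s) (s ^ k) SA R (Real.cos θ) (Real.sin θ) ε₀ ε₁ ε₂
      hm0 hUne hSAne hAne hSA2 he0' htrig
    linear_combination this
  · have := alg3 m h (U s) SA (Real.cos θ) (Real.sin θ) ε₀ ε₁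
      hm0 hSAne hSA2 he0' he1' htrig
    linear_combination this

end
end

section
/- Define ν(s,t) := (−ε₂/x(s))·(ε₂·ρ(s)·cos θ(s,t) − h·m·V(s)·sin θ(s,t), ε₂·ρ(s)·sin θ(s,t) + h·m·V(s)·cos θ(s,t), −ε₀·m·V(s)·x(s)). Then for every t ∈ ℝ, the limiting normal curvature of Ψ at the singular point (0,t), namely Ψ_{tt}(0,t)·ν(0,t)/‖Ψ_t(0,t)‖², equals ρ(0)/(m²·U(0)²); in particular it is nonzero. -/
noncomputable section

open Real

/-- The unit normal vector field `ν` along `Ψ`. -/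
def nuB (U V : ℝ → ℝ) (k : ℕ) (m h ε₀ ε₁ ε₂ : ℝ) (s t : ℝ) : Fin 3 → ℝ :=
  (-ε₂ / xB U m h ε₀ s) •
    ![ε₂ * rhoB U V m h s * Real.cos (thetaB U V k m h ε₁ ε₂ s t)
        - h * m * V s * Real.sin (thetaB U V k m h ε₁ ε₂ s t),
      ε₂ * rhoB U V m h s * Real.sin (thetaB U V k m h ε₁ ε₂ s t)
        + h * m * V s * Real.cos (thetaB U V k m h ε₁ ε₂ s t),
      -ε₀ * m * V s * xB U m h ε₀ s]

/-- The limiting normal curvature of `Ψ` at the singular point `(0,t)`,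
namely `Ψ_tt(0,t)·ν(0,t)/‖Ψ_t(0,t)‖²`, equals `ρ(0)/(m²U(0)²)`; in particular
it is nonzero. -/
theorem stmt6
    (k : ℕ) (hk : 1 ≤ k)
    (J : Set ℝ) (hJo : IsOpen J) (hJc : Convex ℝ J) (hJ0 : (0:ℝ) ∈ J)
    (U V : ℝ → ℝ) (hU : ContDiff ℝ (⊤ : ℕ∞) U) (hV : ContDiff ℝ (⊤ : ℕ∞) V)
    (hUpos : ∀ s ∈ J, 0 < U s) (hU' : ∀ s ∈ J, deriv U s = s ^ k * V s)
    (m h : ℝ) (hm : 0 < m)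
    (h1 : ∀ s ∈ J, 0 < m ^ 2 * U s ^ 2 - h ^ 2)
    (h2 : ∀ s ∈ J, 0 < m ^ 2 * U s ^ 2 - h ^ 2 - m ^ 4 * U s ^ 2 * V s ^ 2)
    (ε₀ ε₁ ε₂ : ℝ) (he0 : ε₀ = 1 ∨ ε₀ = -1) (he1 : ε₁ = 1 ∨ ε₁ = -1)
    (he2 : ε₂ = 1 ∨ ε₂ = -1) :
    ∀ t : ℝ,
      dot3 (iteratedDeriv 2 (fun t' => PsiB U V k m h ε₀ ε₁ ε₂ 0 t') t)
            (nuB U V k m h ε₀ ε₁ ε₂ 0 t)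
          / norm3 (deriv (fun t' => PsiB U V k m h ε₀ ε₁ ε₂ 0 t') t) ^ 2
        = rhoB U V m h 0 / (m ^ 2 * U 0 ^ 2)
      ∧ dot3 (iteratedDeriv 2 (fun t' => PsiB U V k m h ε₀ ε₁ ε₂ 0 t') t)
            (nuB U V k m h ε₀ ε₁ ε₂ 0 t)
          / norm3 (deriv (fun t' => PsiB U V k m h ε₀ ε₁ ε₂ 0 t') t) ^ 2 ≠ 0 := by
  intro t
  have h10 := h1 0 hJ0
  have h20 := h2 0 hJ0
  have hU0 := hUpos 0 hJ0
  have he0sq : ε₀ ^ 2 = 1 := by rcases he0 with h' | h' <;> rw [h'] <;> ring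
  have he1sq : ε₁ ^ 2 = 1 := by rcases he1 with h' | h' <;> rw [h'] <;> ring
  have he2sq : ε₂ ^ 2 = 1 := by rcases he2 with h' | h' <;> rw [h'] <;> ring
  set a := xB U m h ε₀ 0 with ha
  set c := ε₁ / m with hc
  set ρ0 := rhoB U V m h 0 with hρ0
  have hasq : a ^ 2 = m ^ 2 * U 0 ^ 2 - h ^ 2 := by
    rw [ha, xB, mul_pow, he0sq, one_mul, Real.sq_sqrt h10.le]
  have hane : a ≠ 0 := by
    intro h'
    rw [h', zero_pow (by norm_num)] at hasq
    linarith
  have hcsq : c ^ 2 = 1 / m ^ 2 := by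
    rw [hc, div_pow, he1sq]
  have hcne : c ≠ 0 := by
    intro h'
    rw [h', zero_pow (by norm_num)] at hcsq
    have : m ^ 2 > 0 := by positivity
    rw [eq_comm, div_eq_zero_iff] at hcsq
    simp at hcsq
    linarith
  have hρ0pos : 0 < ρ0 := Real.sqrt_pos.2 h20
  have hθ : ∀ t', thetaB U V k m h ε₁ ε₂ 0 t' = c * t' := by
    intro t'
    rw [thetaB, intervalIntegral.integral_same, hc]
    ring
  have hz : zB U V k m h ε₂ 0 = 0 := by
    rw [zB, intervalIntegral.integral_same, mul_zero]
  have hF : (fun t' => PsiB U V k m h ε₀ ε₁ ε₂ 0 t')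
      = fun t' => ![a * Real.cos (c * t'), a * Real.sin (c * t'), h * (c * t')] := by
    funext t'
    funext i
    fin_cases i <;> simp [PsiB, hθ, hz, ha]
  have hD1 : ∀ τ : ℝ, HasDerivAt
      (fun t' => (![a * Real.cos (c * t'), a * Real.sin (c * t'), h * (c * t')] : Fin 3 → ℝ))
      ![-(a * c) * Real.sin (c * τ), (a * c) * Real.cos (c * τ), h * c] τ := by
    intro τ
    rw [hasDerivAt_pi]
    intro i
    fin_cases i
    · have := (((hasDerivAt_id τ).const_mul c).cos).const_mul a
      simpa using this.congr_deriv (by simp only [id_eq]; ring)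
    · have := (((hasDerivAt_id τ).const_mul c).sin).const_mul a
      simpa using this.congr_deriv (by simp only [id_eq]; ring)
    · have := (((hasDerivAt_id τ).const_mul c)).const_mul h
      simpa using this.congr_deriv (by ring)
  have hD2 : HasDerivAt
      (fun τ => (![-(a * c) * Real.sin (c * τ), (a * c) * Real.cos (c * τ), h * c] : Fin 3 → ℝ))
      ![-(a * c * c) * Real.cos (c * t), -(a * c * c) * Real.sin (c * t), 0] t := by
    rw [hasDerivAt_pi]
    intro i
    fin_cases i
    · have := (((hasDerivAt_id t).const_mul c).sin).const_mul (-(a * c))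
      simpa using this.congr_deriv (by simp only [id_eq]; ring)
    · have := (((hasDerivAt_id t).const_mul c).cos).const_mul (a * c)
      simpa using this.congr_deriv (by simp only [id_eq]; ring)
    · simpa using (hasDerivAt_const t (h * c))
  have hderiv : deriv (fun t' => PsiB U V k m h ε₀ ε₁ ε₂ 0 t')
      = fun τ => (![-(a * c) * Real.sin (c * τ), (a * c) * Real.cos (c * τ), h * c] : Fin 3 → ℝ) := by
    funext τ
    rw [hF]
    exact (hD1 τ).deriv
  have hiter : iteratedDeriv 2 (fun t' => PsiB U V k m h ε₀ ε₁ ε₂ 0 t') t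
      = ![-(a * c * c) * Real.cos (c * t), -(a * c * c) * Real.sin (c * t), 0] := by
    rw [show (2:ℕ) = 1 + 1 from rfl, iteratedDeriv_succ, iteratedDeriv_one, hderiv]
    exact hD2.deriv
  set S := Real.sin (c * t) with hS
  set C := Real.cos (c * t) with hC
  have hpyth : S ^ 2 + C ^ 2 = 1 := Real.sin_sq_add_cos_sq (c * t)
  have hnormsq : norm3 (deriv (fun t' => PsiB U V k m h ε₀ ε₁ ε₂ 0 t') t) ^ 2
      = U 0 ^ 2 := by
    rw [hderiv]
    have hdd : dot3 (![-(a * c) * S, (a * c) * C, h * c])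
        (![-(a * c) * S, (a * c) * C, h * c]) = U 0 ^ 2 := by
      simp only [dot3, Matrix.cons_val_zero, Matrix.cons_val_one, Matrix.head_cons,
        Matrix.cons_val_two, Matrix.tail_cons]
      have : (-(a * c) * S) * (-(a * c) * S) + (a * c) * C * ((a * c) * C) + h * c * (h * c)
          = (a ^ 2 + h ^ 2) * c ^ 2 + (a * c) ^ 2 * (S ^ 2 + C ^ 2 - 1) := by ring
      rw [this, hpyth, hasq, hcsq]
      field_simp
      ring
    simp only [norm3]
    rw [Real.sq_sqrt (by rw [hdd]; positivity)]
    exact hdd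
  have hnum : dot3 (iteratedDeriv 2 (fun t' => PsiB U V k m h ε₀ ε₁ ε₂ 0 t') t)
      (nuB U V k m h ε₀ ε₁ ε₂ 0 t) = ρ0 / m ^ 2 := by
    rw [hiter, nuB, ← ha, ← hρ0, hθ t, ← hS, ← hC]
    simp only [dot3, Pi.smul_apply, smul_eq_mul, Matrix.cons_val_zero, Matrix.cons_val_one,
      Matrix.head_cons, Matrix.cons_val_two, Matrix.tail_cons]
    have expand : -(a * c * c) * C * (-ε₂ / a * (ε₂ * ρ0 * C - h * m * V 0 * S))
        + -(a * c * c) * S * (-ε₂ / a * (ε₂ * ρ0 * S + h * m * V 0 * C))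
        + 0 * (-ε₂ / a * (-ε₀ * m * V 0 * a))
        = (a / a) * (ε₂ ^ 2) * (c ^ 2) * ρ0 * (S ^ 2 + C ^ 2) := by
      field_simp
      ring
    rw [expand, div_self hane, hpyth, he2sq, hcsq]
    ring
  constructor
  · rw [hnum, hnormsq, hρ0]
    rw [div_div]
  · rw [hnum, hnormsq]
    have : 0 < m ^ 2 := by positivity
    positivity

end
end

section
/- For every t ∈ ℝ, the following hold at (0,t): Ψ_t·∂_s^{k+1}Ψ = 0; ‖Ψ_t × ∂_s^{k+1}Ψ‖² = (k!)²·U(0)²; det(Ψ_t, ∂_s^{k+1}Ψ, ∂_t ∂_s^{k+1}Ψ) = h·(k!)²/m². Consequently the cusp-directional torsion of Ψ at (0,t), namely det(Ψ_t, ∂_s^{k+1}Ψ, ∂_t ∂_s^{k+1}Ψ)/‖Ψ_t × ∂_s^{k+1}Ψ‖² − (Ψ_t·∂_s^{k+1}Ψ)·det(Ψ_t, ∂_s^{k+1}Ψ, Ψ_{tt})/(‖Ψ_t‖²·‖Ψ_t × ∂_s^{k+1}Ψ‖²) evaluated at (0,t), equals h/(m²·U(0)²). -/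
noncomputable section

open Real
open scoped ContDiff

private lemma ev_iteratedDeriv_smul {F : Type*} [NormedAddCommGroup F] [NormedSpace ℝ F]
    (k : ℕ) :
    ∀ (g : ℝ → F) (J : Set ℝ), IsOpen J → (0:ℝ) ∈ J → ContDiffOn ℝ ∞ g J →
      iteratedDeriv k (fun s : ℝ => s ^ k • g s) 0 = (k.factorial : ℝ) • g 0 := by
  induction k with
  | zero => intro g J _ _ _; simp
  | succ k ih =>
    intro g J hJo hJ0 hg
    have hJn : J ∈ nhds (0:ℝ) := hJo.mem_nhds hJ0
    have hg' : ContDiffOn ℝ ∞ (deriv g) J := hg.deriv_of_isOpen hJo (by simp)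
    set g1 : ℝ → F := fun s => ((k:ℝ)+1) • g s + s • deriv g s with hg1def
    have hder : ∀ s ∈ J, deriv (fun s : ℝ => s ^ (k+1) • g s) s = s ^ k • g1 s := by
      intro s hs
      have hgd : HasDerivAt g (deriv g s) s :=
        ((hg.differentiableOn (by simp)).differentiableAt (hJo.mem_nhds hs)).hasDerivAt
      have hD := (hasDerivAt_pow (k+1) s).smul hgd
      rw [HasDerivAt.deriv (f := fun s : ℝ => s ^ (k+1) • g s) hD]
      simp only [hg1def, smul_add, smul_smul]
      rw [Nat.add_sub_cancel]
      push_cast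
      module
    rw [iteratedDeriv_succ']
    have hev : deriv (fun s : ℝ => s ^ (k+1) • g s) =ᶠ[nhds (0:ℝ)] fun s => s ^ k • g1 s :=
      Filter.eventuallyEq_of_mem hJn hder
    rw [hev.iteratedDeriv_eq k]
    have hg1C : ContDiffOn ℝ ∞ g1 J :=
      (contDiffOn_const.smul hg).add (contDiffOn_id.smul hg')
    rw [ih g1 J hJo hJ0 hg1C]
    simp only [hg1def, zero_smul, add_zero, smul_smul, Nat.factorial_succ]
    push_cast
    ring_nf

private lemma factor_iteratedDeriv {F : Type*} [NormedAddCommGroup F] [NormedSpace ℝ F]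
    (k : ℕ) (f g : ℝ → F) (J : Set ℝ) (hJo : IsOpen J) (hJ0 : (0:ℝ) ∈ J)
    (hg : ContDiffOn ℝ ∞ g J) (hf : ∀ s ∈ J, HasDerivAt f ((s ^ k) • g s) s) :
    iteratedDeriv (k+1) f 0 = (k.factorial : ℝ) • g 0 := by
  rw [iteratedDeriv_succ']
  have hev : deriv f =ᶠ[nhds (0:ℝ)] fun s => s ^ k • g s :=
    Filter.eventuallyEq_of_mem (hJo.mem_nhds hJ0) (fun s hs => (hf s hs).deriv)
  rw [hev.iteratedDeriv_eq k]
  exact ev_iteratedDeriv_smul k g J hJo hJ0 hg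

private def AB (U V : ℝ → ℝ) (m h ε₀ : ℝ) (s : ℝ) : ℝ :=
  ε₀ * m ^ 2 * U s * V s / Real.sqrt (m ^ 2 * U s ^ 2 - h ^ 2)

private def BBf (U V : ℝ → ℝ) (m h ε₂ : ℝ) (s : ℝ) : ℝ :=
  -(ε₂ * h * rhoB U V m h s) / (m * U s * (m ^ 2 * U s ^ 2 - h ^ 2))

private def CBf (U V : ℝ → ℝ) (m h ε₂ : ℝ) (s : ℝ) : ℝ :=
  ε₂ * m * U s * rhoB U V m h s / (m ^ 2 * U s ^ 2 - h ^ 2)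

private def GG (U V : ℝ → ℝ) (k : ℕ) (m h ε₀ ε₁ ε₂ t : ℝ) (s : ℝ) : Fin 3 → ℝ :=
  ![AB U V m h ε₀ s * Real.cos (thetaB U V k m h ε₁ ε₂ s t)
      - xB U m h ε₀ s * BBf U V m h ε₂ s * Real.sin (thetaB U V k m h ε₁ ε₂ s t),
    AB U V m h ε₀ s * Real.sin (thetaB U V k m h ε₁ ε₂ s t)
      + xB U m h ε₀ s * BBf U V m h ε₂ s * Real.cos (thetaB U V k m h ε₁ ε₂ s t),
    CBf U V m h ε₂ s + h * BBf U V m h ε₂ s]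


private lemma alg_all
    (m h U0 V0 x0 ρ0 c s e1 e2 kf A0 B0 C0 : ℝ)
    (hm : m ≠ 0) (hU0 : U0 ≠ 0)
    (hQne : m^2*U0^2 - h^2 ≠ 0)
    (hQ : x0^2 = m^2*U0^2 - h^2)
    (hρ : ρ0^2 = m^2*U0^2 - h^2 - m^4*U0^2*V0^2)
    (hcs : s^2 + c^2 = 1) (he1 : e1^2 = 1) (he2 : e2^2 = 1)
    (hA : A0 = m^2*U0*V0*x0 / (m^2*U0^2 - h^2))
    (hB : B0 = -(e2*h*ρ0) / (m*U0*(m^2*U0^2 - h^2)))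
    (hC : C0 = e2*m*U0*ρ0 / (m^2*U0^2 - h^2)) :
    (-(x0*(e1/m)*s))*(kf*(A0*c - x0*B0*s)) + (x0*(e1/m)*c)*(kf*(A0*s + x0*B0*c))
      + (h*(e1/m))*(kf*(C0 + h*B0)) = 0 ∧
    ((x0*(e1/m)*c)*(kf*(C0 + h*B0)) - (h*(e1/m))*(kf*(A0*s + x0*B0*c)))*((x0*(e1/m)*c)*(kf*(C0 + h*B0)) - (h*(e1/m))*(kf*(A0*s + x0*B0*c)))
      + ((h*(e1/m))*(kf*(A0*c - x0*B0*s)) - (-(x0*(e1/m)*s))*(kf*(C0 + h*B0)))*((h*(e1/m))*(kf*(A0*c - x0*B0*s)) - (-(x0*(e1/m)*s))*(kf*(C0 + h*B0)))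
      + ((-(x0*(e1/m)*s))*(kf*(A0*s + x0*B0*c)) - (x0*(e1/m)*c)*(kf*(A0*c - x0*B0*s)))*((-(x0*(e1/m)*s))*(kf*(A0*s + x0*B0*c)) - (x0*(e1/m)*c)*(kf*(A0*c - x0*B0*s)))
      = kf^2*U0^2 ∧
    (-(x0*(e1/m)*s))*((kf*(A0*s + x0*B0*c))*0 - (kf*(C0 + h*B0))*(kf*(A0*(e1/m)*c - x0*B0*(e1/m)*s)))
      - (kf*(A0*c - x0*B0*s))*((x0*(e1/m)*c)*0 - (h*(e1/m))*(kf*(A0*(e1/m)*c - x0*B0*(e1/m)*s)))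
      + (kf*(-(A0*(e1/m)*s) - x0*B0*(e1/m)*c))*((x0*(e1/m)*c)*(kf*(C0 + h*B0)) - (h*(e1/m))*(kf*(A0*s + x0*B0*c)))
      = h*kf^2/m^2 := by
  have hD : (m*U0*(m^2*U0^2-h^2)) ≠ 0 := mul_ne_zero (mul_ne_zero hm hU0) hQne
  have ha : A0*(m*U0*(m^2*U0^2-h^2)) = m^3*U0^2*V0*x0 := by
    rw [hA, div_mul_eq_mul_div, div_eq_iff hQne]; ring
  have hb : B0*(m*U0*(m^2*U0^2-h^2)) = -(e2*h*ρ0) := by rw [hB, div_mul_cancel₀ _ hD]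
  have hc : C0*(m*U0*(m^2*U0^2-h^2)) = e2*m^2*U0^2*ρ0 := by
    rw [hC, div_mul_eq_mul_div, div_eq_iff hQne]; ring
  have hBC : x0^2*B0 + h*C0 + h^2*B0 = 0 := by
    apply mul_right_cancel₀ hD
    linear_combination x0^2*hb + h*hc + h^2*hb + (-(e2*h*ρ0))*hQ
  have hkey2 : A0^2 + x0^2*B0^2 + (C0 + h*B0)^2 = 1 := by
    apply mul_right_cancel₀ (pow_ne_zero 2 hD)
    linear_combination (A0*(m*U0*(m^2*U0^2-h^2)) + m^3*U0^2*V0*x0)*ha + x0^2*(B0*(m*U0*(m^2*U0^2-h^2)) + -(e2*h*ρ0))*hb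
      + (C0*(m*U0*(m^2*U0^2-h^2)) + h*(B0*(m*U0*(m^2*U0^2-h^2))) + e2*m^2*U0^2*ρ0 + h*(-(e2*h*ρ0)))*hc
      + h*(C0*(m*U0*(m^2*U0^2-h^2)) + h*(B0*(m*U0*(m^2*U0^2-h^2))) + e2*m^2*U0^2*ρ0 + h*(-(e2*h*ρ0)))*hb
      + (m^6*U0^4*V0^2 + e2^2*h^2*ρ0^2)*hQ
      + (h^2*ρ0^2*(m^2*U0^2-h^2) + ρ0^2*(m^2*U0^2-h^2)^2)*he2
      + ((m^2*U0^2-h^2)*m^2*U0^2)*hρ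
  have hkey3 : h*A0^2 - x0^2*B0*C0 = h := by
    apply mul_right_cancel₀ (pow_ne_zero 2 hD)
    linear_combination h*(A0*(m*U0*(m^2*U0^2-h^2)) + m^3*U0^2*V0*x0)*ha - x0^2*(C0*(m*U0*(m^2*U0^2-h^2)))*hb
      - x0^2*(-(e2*h*ρ0))*hc
      + (h*m^6*U0^4*V0^2 + e2^2*h*m^2*U0^2*ρ0^2)*hQ
      + ((m^2*U0^2-h^2)*h*m^2*U0^2*ρ0^2)*he2
      + (h*m^2*U0^2*(m^2*U0^2-h^2))*hρ
  have h1 : (-(x0*(e1/m)*s))*(kf*(A0*c - x0*B0*s)) + (x0*(e1/m)*c)*(kf*(A0*s + x0*B0*c))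
      + (h*(e1/m))*(kf*(C0 + h*B0)) = 0 := by
    linear_combination (kf*(e1/m)*x0^2*B0)*hcs + (kf*(e1/m))*hBC
  have h2 : (-(x0*(e1/m)*s))^2 + (x0*(e1/m)*c)^2 + (h*(e1/m))^2 = U0^2 := by
    field_simp
    linear_combination (x0^2*e1^2)*hcs + (e1^2)*hQ + (m^2*U0^2)*he1
  have h3 : (kf*(A0*c - x0*B0*s))^2 + (kf*(A0*s + x0*B0*c))^2 + (kf*(C0 + h*B0))^2 = kf^2 := by
    linear_combination (kf^2*(A0^2+x0^2*B0^2))*hcs + kf^2*hkey2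
  refine ⟨h1, ?_, ?_⟩
  · linear_combination kf^2*h2 + ((-(x0*(e1/m)*s))^2 + (x0*(e1/m)*c)^2 + (h*(e1/m))^2)*h3
      - ((-(x0*(e1/m)*s))*(kf*(A0*c - x0*B0*s)) + (x0*(e1/m)*c)*(kf*(A0*s + x0*B0*c))
      + (h*(e1/m))*(kf*(C0 + h*B0)))*h1
  · linear_combination ((e1/m)^2*kf^2*(h*A0^2 - x0^2*B0*C0))*hcs + ((e1/m)^2*kf^2)*hkey3
      + (h*kf^2/m^2)*he1

/-- At `(0,t)`: `Ψ_t·∂_s^{k+1}Ψ = 0`, `‖Ψ_t × ∂_s^{k+1}Ψ‖² = (k!)²U(0)²`,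
`det(Ψ_t, ∂_s^{k+1}Ψ, ∂_t∂_s^{k+1}Ψ) = h(k!)²/m²`; consequently the cusp-directional
torsion of `Ψ` at `(0,t)` equals `h/(m²U(0)²)`. -/
theorem stmt7
    (k : ℕ) (hk : 1 ≤ k)
    (J : Set ℝ) (hJo : IsOpen J) (hJc : Convex ℝ J) (hJ0 : (0:ℝ) ∈ J)
    (U V : ℝ → ℝ) (hU : ContDiff ℝ (⊤ : ℕ∞) U) (hV : ContDiff ℝ (⊤ : ℕ∞) V)
    (hUpos : ∀ s ∈ J, 0 < U s) (hU' : ∀ s ∈ J, deriv U s = s ^ k * V s)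
    (m h : ℝ) (hm : 0 < m)
    (h1 : ∀ s ∈ J, 0 < m ^ 2 * U s ^ 2 - h ^ 2)
    (h2 : ∀ s ∈ J, 0 < m ^ 2 * U s ^ 2 - h ^ 2 - m ^ 4 * U s ^ 2 * V s ^ 2)
    (ε₀ ε₁ ε₂ : ℝ) (he0 : ε₀ = 1 ∨ ε₀ = -1) (he1 : ε₁ = 1 ∨ ε₁ = -1)
    (he2 : ε₂ = 1 ∨ ε₂ = -1) :
    ∀ t : ℝ,
      dot3 (deriv (fun t' => PsiB U V k m h ε₀ ε₁ ε₂ 0 t') t)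
          (iteratedDeriv (k + 1) (fun s' => PsiB U V k m h ε₀ ε₁ ε₂ s' t) 0) = 0
      ∧ norm3 (cross3 (deriv (fun t' => PsiB U V k m h ε₀ ε₁ ε₂ 0 t') t)
            (iteratedDeriv (k + 1) (fun s' => PsiB U V k m h ε₀ ε₁ ε₂ s' t) 0)) ^ 2
          = (k.factorial : ℝ) ^ 2 * U 0 ^ 2
      ∧ det3 (deriv (fun t' => PsiB U V k m h ε₀ ε₁ ε₂ 0 t') t)
            (iteratedDeriv (k + 1) (fun s' => PsiB U V k m h ε₀ ε₁ ε₂ s' t) 0)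
            (deriv (fun t' => iteratedDeriv (k + 1)
              (fun s' => PsiB U V k m h ε₀ ε₁ ε₂ s' t') 0) t)
          = h * (k.factorial : ℝ) ^ 2 / m ^ 2
      ∧ det3 (deriv (fun t' => PsiB U V k m h ε₀ ε₁ ε₂ 0 t') t)
              (iteratedDeriv (k + 1) (fun s' => PsiB U V k m h ε₀ ε₁ ε₂ s' t) 0)
              (deriv (fun t' => iteratedDeriv (k + 1)
                (fun s' => PsiB U V k m h ε₀ ε₁ ε₂ s' t') 0) t)
            / norm3 (cross3 (deriv (fun t' => PsiB U V k m h ε₀ ε₁ ε₂ 0 t') t)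
              (iteratedDeriv (k + 1) (fun s' => PsiB U V k m h ε₀ ε₁ ε₂ s' t) 0)) ^ 2
          - dot3 (deriv (fun t' => PsiB U V k m h ε₀ ε₁ ε₂ 0 t') t)
                (iteratedDeriv (k + 1) (fun s' => PsiB U V k m h ε₀ ε₁ ε₂ s' t) 0)
              * det3 (deriv (fun t' => PsiB U V k m h ε₀ ε₁ ε₂ 0 t') t)
                  (iteratedDeriv (k + 1) (fun s' => PsiB U V k m h ε₀ ε₁ ε₂ s' t) 0)
                  (iteratedDeriv 2 (fun t' => PsiB U V k m h ε₀ ε₁ ε₂ 0 t') t)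
              / (norm3 (deriv (fun t' => PsiB U V k m h ε₀ ε₁ ε₂ 0 t') t) ^ 2
                * norm3 (cross3 (deriv (fun t' => PsiB U V k m h ε₀ ε₁ ε₂ 0 t') t)
                  (iteratedDeriv (k + 1) (fun s' => PsiB U V k m h ε₀ ε₁ ε₂ s' t) 0)) ^ 2)
          = h / (m ^ 2 * U 0 ^ 2) := by
  have hm' : m ≠ 0 := ne_of_gt hm
  have hU8 : ContDiff ℝ ∞ U := hU.of_le (by simp)
  have hV8 : ContDiff ℝ ∞ V := hV.of_le (by simp)
  have hUc : Continuous U := hU8.continuous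
  have hVc : Continuous V := hV8.continuous
  have hUd : ∀ s ∈ J, HasDerivAt U (s ^ k * V s) s := by
    intro s hs
    have := ((hU.differentiable (by simp)) s).hasDerivAt
    rwa [hU' s hs] at this
  have hrne : ∀ s ∈ J, Real.sqrt (m ^ 2 * U s ^ 2 - h ^ 2) ≠ 0 :=
    fun s hs => ne_of_gt (Real.sqrt_pos.2 (h1 s hs))
  have hxd : ∀ s ∈ J, HasDerivAt (xB U m h ε₀) (s ^ k * AB U V m h ε₀ s) s := by
    intro s hs
    have hQ : HasDerivAt (fun s' => m ^ 2 * U s' ^ 2 - h ^ 2)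
        (2 * m ^ 2 * U s * (s ^ k * V s)) s := by
      have := (((hUd s hs).pow 2).const_mul (m ^ 2)).sub_const (h ^ 2)
      exact this.congr_deriv (by push_cast; ring)
    have hs' := (hQ.sqrt (ne_of_gt (h1 s hs))).const_mul ε₀
    have hval : ε₀ * (2 * m ^ 2 * U s * (s ^ k * V s) / (2 * Real.sqrt (m ^ 2 * U s ^ 2 - h ^ 2)))
        = s ^ k * AB U V m h ε₀ s := by
      simp only [AB]
      field_simp
    rw [hval] at hs'
    exact hs'
  have hFTC : ∀ ψ : ℝ → ℝ, ContinuousOn ψ J → ∀ s ∈ J,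
      HasDerivAt (fun u => ∫ ζ in (0:ℝ)..u, ψ ζ) (ψ s) s := by
    intro ψ hψ s hs
    refine intervalIntegral.integral_hasDerivAt_right ?_ ?_ ?_
    · exact (hψ.mono (hJc.ordConnected.uIcc_subset hJ0 hs)).intervalIntegrable
    · exact ContinuousOn.stronglyMeasurableAtFilter hJo hψ s hs
    · exact hψ.continuousAt (hJo.mem_nhds hs)
  have hρcont : Continuous (rhoB U V m h) :=
    Real.continuous_sqrt.comp
      (((continuous_const.mul (hUc.pow 2)).sub continuous_const).sub
        ((continuous_const.mul (hUc.pow 2)).mul (hVc.pow 2)))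
  have hψzc : ContinuousOn
      (fun ζ => ζ ^ k * U ζ * rhoB U V m h ζ / (m ^ 2 * U ζ ^ 2 - h ^ 2)) J :=
    ContinuousOn.div (((continuous_pow k).mul hUc).mul hρcont).continuousOn
      ((continuous_const.mul (hUc.pow 2)).sub continuous_const).continuousOn
      (fun s hs => (h1 s hs).ne')
  have hψθc : ContinuousOn
      (fun ζ => ζ ^ k * rhoB U V m h ζ / (U ζ * (m ^ 2 * U ζ ^ 2 - h ^ 2))) J :=
    ContinuousOn.div ((continuous_pow k).mul hρcont).continuousOn
      (hUc.mul ((continuous_const.mul (hUc.pow 2)).sub continuous_const)).continuousOn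
      (fun s hs => mul_ne_zero (hUpos s hs).ne' (h1 s hs).ne')
  have hzd : ∀ s ∈ J, HasDerivAt (zB U V k m h ε₂) (s ^ k * CBf U V m h ε₂ s) s := by
    intro s hs
    have h0 := (hFTC _ hψzc s hs).const_mul (ε₂ * m)
    have hval : ε₂ * m * (s ^ k * U s * rhoB U V m h s / (m ^ 2 * U s ^ 2 - h ^ 2))
        = s ^ k * CBf U V m h ε₂ s := by
      simp only [CBf]
      field_simp
    rw [hval] at h0
    exact h0
  have hθd : ∀ t, ∀ s ∈ J, HasDerivAt (fun s' => thetaB U V k m h ε₁ ε₂ s' t)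
      (s ^ k * BBf U V m h ε₂ s) s := by
    intro t s hs
    have h0 := (((hFTC _ hψθc s hs).const_mul (ε₂ * h)).const_sub (ε₁ * t)).const_mul (1 / m)
    have hval : 1 / m * -(ε₂ * h * (s ^ k * rhoB U V m h s / (U s * (m ^ 2 * U s ^ 2 - h ^ 2))))
        = s ^ k * BBf U V m h ε₂ s := by
      simp only [BBf]
      field_simp
    rw [hval] at h0
    exact h0
  have hQC : ContDiff ℝ ∞ (fun s => m ^ 2 * U s ^ 2 - h ^ 2) :=
    (contDiff_const.mul (hU8.pow 2)).sub contDiff_const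
  have hrC : ContDiffOn ℝ ∞ (fun s => Real.sqrt (m ^ 2 * U s ^ 2 - h ^ 2)) J :=
    hQC.contDiffOn.sqrt (fun s hs => (h1 s hs).ne')
  have hρC : ContDiffOn ℝ ∞ (rhoB U V m h) J :=
    ContDiffOn.sqrt
      ((hQC.sub ((contDiff_const.mul (hU8.pow 2)).mul (hV8.pow 2))).contDiffOn)
      (fun s hs => (h2 s hs).ne')
  have hxC : ContDiffOn ℝ ∞ (xB U m h ε₀) J := contDiffOn_const.mul hrC
  have hAC : ContDiffOn ℝ ∞ (AB U V m h ε₀) J :=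
    ContDiffOn.div ((contDiff_const.mul hU8).mul hV8).contDiffOn hrC hrne
  have hBC' : ContDiffOn ℝ ∞ (BBf U V m h ε₂) J :=
    ContDiffOn.div (contDiffOn_const.mul hρC).neg
      ((contDiff_const.mul hU8).mul hQC).contDiffOn
      (fun s hs => mul_ne_zero (mul_ne_zero hm' (hUpos s hs).ne') (h1 s hs).ne')
  have hCC : ContDiffOn ℝ ∞ (CBf U V m h ε₂) J :=
    ContDiffOn.div (((contDiff_const.mul hU8).contDiffOn).mul hρC)
      hQC.contDiffOn (fun s hs => (h1 s hs).ne')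
  have hθsC : ∀ t, ContDiffOn ℝ ∞ (fun s => thetaB U V k m h ε₁ ε₂ s t) J := by
    intro t
    rw [contDiffOn_infty_iff_deriv_of_isOpen hJo]
    constructor
    · exact fun s hs => ((hθd t s hs).differentiableAt).differentiableWithinAt
    · exact ContDiffOn.congr ((contDiff_id.pow k).contDiffOn.mul hBC')
        (fun s hs => (hθd t s hs).deriv)
  have hGC : ∀ t, ContDiffOn ℝ ∞ (GG U V k m h ε₀ ε₁ ε₂ t) J := by
    intro t
    apply contDiffOn_pi.2
    intro i
    have hcos : ContDiffOn ℝ ∞ (fun s => Real.cos (thetaB U V k m h ε₁ ε₂ s t)) J :=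
      Real.contDiff_cos.comp_contDiffOn (hθsC t)
    have hsin : ContDiffOn ℝ ∞ (fun s => Real.sin (thetaB U V k m h ε₁ ε₂ s t)) J :=
      Real.contDiff_sin.comp_contDiffOn (hθsC t)
    fin_cases i
    · show ContDiffOn ℝ ∞ (fun s => AB U V m h ε₀ s * Real.cos (thetaB U V k m h ε₁ ε₂ s t)
        - xB U m h ε₀ s * BBf U V m h ε₂ s * Real.sin (thetaB U V k m h ε₁ ε₂ s t)) J
      exact (hAC.mul hcos).sub ((hxC.mul hBC').mul hsin)
    · show ContDiffOn ℝ ∞ (fun s => AB U V m h ε₀ s * Real.sin (thetaB U V k m h ε₁ ε₂ s t)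
        + xB U m h ε₀ s * BBf U V m h ε₂ s * Real.cos (thetaB U V k m h ε₁ ε₂ s t)) J
      exact (hAC.mul hsin).add ((hxC.mul hBC').mul hcos)
    · show ContDiffOn ℝ ∞ (fun s => CBf U V m h ε₂ s + h * BBf U V m h ε₂ s) J
      exact hCC.add (contDiffOn_const.mul hBC')
  have hPsiD : ∀ t, ∀ s ∈ J, HasDerivAt (fun s' => PsiB U V k m h ε₀ ε₁ ε₂ s' t)
      (s ^ k • GG U V k m h ε₀ ε₁ ε₂ t s) s := by
    intro t s hs
    rw [hasDerivAt_pi]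
    intro i
    fin_cases i
    · show HasDerivAt (fun s' => xB U m h ε₀ s' * Real.cos (thetaB U V k m h ε₁ ε₂ s' t))
        (s ^ k * (AB U V m h ε₀ s * Real.cos (thetaB U V k m h ε₁ ε₂ s t)
          - xB U m h ε₀ s * BBf U V m h ε₂ s * Real.sin (thetaB U V k m h ε₁ ε₂ s t))) s
      have := (hxd s hs).mul ((hθd t s hs).cos)
      exact this.congr_deriv (by ring)
    · show HasDerivAt (fun s' => xB U m h ε₀ s' * Real.sin (thetaB U V k m h ε₁ ε₂ s' t))
        (s ^ k * (AB U V m h ε₀ s * Real.sin (thetaB U V k m h ε₁ ε₂ s t)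
          + xB U m h ε₀ s * BBf U V m h ε₂ s * Real.cos (thetaB U V k m h ε₁ ε₂ s t))) s
      have := (hxd s hs).mul ((hθd t s hs).sin)
      exact this.congr_deriv (by ring)
    · show HasDerivAt (fun s' => zB U V k m h ε₂ s' + h * thetaB U V k m h ε₁ ε₂ s' t)
        (s ^ k * (CBf U V m h ε₂ s + h * BBf U V m h ε₂ s)) s
      have := (hzd s hs).add ((hθd t s hs).const_mul h)
      exact this.congr_deriv (by ring)
  have hKey : ∀ t, iteratedDeriv (k+1) (fun s' => PsiB U V k m h ε₀ ε₁ ε₂ s' t) 0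
      = (k.factorial : ℝ) • GG U V k m h ε₀ ε₁ ε₂ t 0 :=
    fun t => factor_iteratedDeriv k _ _ J hJo hJ0 (hGC t) (hPsiD t)
  have hθ0 : ∀ t, thetaB U V k m h ε₁ ε₂ 0 t = ε₁ * t / m := by
    intro t
    simp only [thetaB, intervalIntegral.integral_same, mul_zero, sub_zero]
    ring
  have hz0 : zB U V k m h ε₂ 0 = 0 := by
    simp [zB]
  have hG0 : ∀ t, GG U V k m h ε₀ ε₁ ε₂ t 0 =
      ![AB U V m h ε₀ 0 * Real.cos (ε₁*t/m)
          - xB U m h ε₀ 0 * BBf U V m h ε₂ 0 * Real.sin (ε₁*t/m),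
        AB U V m h ε₀ 0 * Real.sin (ε₁*t/m)
          + xB U m h ε₀ 0 * BBf U V m h ε₂ 0 * Real.cos (ε₁*t/m),
        CBf U V m h ε₂ 0 + h * BBf U V m h ε₂ 0] := by
    intro t
    simp only [GG, hθ0 t]
  have hlin : ∀ t' : ℝ, HasDerivAt (fun u : ℝ => ε₁ * u / m) (ε₁ / m) t' := by
    intro t'
    simpa using ((hasDerivAt_id t').const_mul ε₁).div_const m
  have hPsifun : (fun t' => PsiB U V k m h ε₀ ε₁ ε₂ 0 t') = fun t' =>
      ![xB U m h ε₀ 0 * Real.cos (ε₁*t'/m), xB U m h ε₀ 0 * Real.sin (ε₁*t'/m),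
        h * (ε₁*t'/m)] := by
    funext t'
    simp only [PsiB, hθ0 t', hz0, zero_add]
  have hPsit : ∀ t, HasDerivAt (fun t' => PsiB U V k m h ε₀ ε₁ ε₂ 0 t')
      ![-(xB U m h ε₀ 0 * (ε₁/m) * Real.sin (ε₁*t/m)),
        xB U m h ε₀ 0 * (ε₁/m) * Real.cos (ε₁*t/m), h * (ε₁/m)] t := by
    intro t
    rw [hPsifun, hasDerivAt_pi]
    intro i
    fin_cases i
    · show HasDerivAt (fun t' => xB U m h ε₀ 0 * Real.cos (ε₁*t'/m))
        (-(xB U m h ε₀ 0 * (ε₁/m) * Real.sin (ε₁*t/m))) t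
      have := ((hlin t).cos).const_mul (xB U m h ε₀ 0)
      exact this.congr_deriv (by ring)
    · show HasDerivAt (fun t' => xB U m h ε₀ 0 * Real.sin (ε₁*t'/m))
        (xB U m h ε₀ 0 * (ε₁/m) * Real.cos (ε₁*t/m)) t
      have := ((hlin t).sin).const_mul (xB U m h ε₀ 0)
      exact this.congr_deriv (by ring)
    · show HasDerivAt (fun t' => h * (ε₁*t'/m)) (h * (ε₁/m)) t
      exact (hlin t).const_mul h
  have hWfun : (fun t' => iteratedDeriv (k+1) (fun s' => PsiB U V k m h ε₀ ε₁ ε₂ s' t') 0)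
      = fun t' => (k.factorial : ℝ) •
        ![AB U V m h ε₀ 0 * Real.cos (ε₁*t'/m)
            - xB U m h ε₀ 0 * BBf U V m h ε₂ 0 * Real.sin (ε₁*t'/m),
          AB U V m h ε₀ 0 * Real.sin (ε₁*t'/m)
            + xB U m h ε₀ 0 * BBf U V m h ε₂ 0 * Real.cos (ε₁*t'/m),
          CBf U V m h ε₂ 0 + h * BBf U V m h ε₂ 0] := by
    funext t'
    rw [hKey t', hG0 t']
  have hWt : ∀ t, HasDerivAt
      (fun t' => iteratedDeriv (k+1) (fun s' => PsiB U V k m h ε₀ ε₁ ε₂ s' t') 0)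
      ((k.factorial : ℝ) •
        ![-(AB U V m h ε₀ 0 * (ε₁/m) * Real.sin (ε₁*t/m))
            - xB U m h ε₀ 0 * BBf U V m h ε₂ 0 * (ε₁/m) * Real.cos (ε₁*t/m),
          AB U V m h ε₀ 0 * (ε₁/m) * Real.cos (ε₁*t/m)
            - xB U m h ε₀ 0 * BBf U V m h ε₂ 0 * (ε₁/m) * Real.sin (ε₁*t/m),
          0]) t := by
    intro t
    rw [hWfun]
    apply HasDerivAt.fun_const_smul
    rw [hasDerivAt_pi]
    intro i
    fin_cases i
    · show HasDerivAt (fun t' => AB U V m h ε₀ 0 * Real.cos (ε₁*t'/m)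
          - xB U m h ε₀ 0 * BBf U V m h ε₂ 0 * Real.sin (ε₁*t'/m))
        (-(AB U V m h ε₀ 0 * (ε₁/m) * Real.sin (ε₁*t/m))
          - xB U m h ε₀ 0 * BBf U V m h ε₂ 0 * (ε₁/m) * Real.cos (ε₁*t/m)) t
      have := (((hlin t).cos).const_mul (AB U V m h ε₀ 0)).sub
        (((hlin t).sin).const_mul (xB U m h ε₀ 0 * BBf U V m h ε₂ 0))
      exact this.congr_deriv (by ring)
    · show HasDerivAt (fun t' => AB U V m h ε₀ 0 * Real.sin (ε₁*t'/m)
          + xB U m h ε₀ 0 * BBf U V m h ε₂ 0 * Real.cos (ε₁*t'/m))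
        (AB U V m h ε₀ 0 * (ε₁/m) * Real.cos (ε₁*t/m)
          - xB U m h ε₀ 0 * BBf U V m h ε₂ 0 * (ε₁/m) * Real.sin (ε₁*t/m)) t
      have := (((hlin t).sin).const_mul (AB U V m h ε₀ 0)).add
        (((hlin t).cos).const_mul (xB U m h ε₀ 0 * BBf U V m h ε₂ 0))
      exact this.congr_deriv (by ring)
    · show HasDerivAt (fun _ : ℝ => CBf U V m h ε₂ 0 + h * BBf U V m h ε₂ 0) (0:ℝ) t
      exact hasDerivAt_const t _
  have he0sq : ε₀ ^ 2 = 1 := by rcases he0 with h' | h' <;> rw [h'] <;> norm_num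
  have he1sq : ε₁ ^ 2 = 1 := by rcases he1 with h' | h' <;> rw [h'] <;> norm_num
  have he2sq : ε₂ ^ 2 = 1 := by rcases he2 with h' | h' <;> rw [h'] <;> norm_num
  have hQ0 : (xB U m h ε₀ 0) ^ 2 = m ^ 2 * U 0 ^ 2 - h ^ 2 := by
    simp only [xB, mul_pow, Real.sq_sqrt (h1 0 hJ0).le, he0sq, one_mul]
  have hρ0 : (rhoB U V m h 0) ^ 2 = m ^ 2 * U 0 ^ 2 - h ^ 2 - m ^ 4 * U 0 ^ 2 * V 0 ^ 2 := by
    simp only [rhoB]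
    exact Real.sq_sqrt (h2 0 hJ0).le
  have hAeq : AB U V m h ε₀ 0
      = m ^ 2 * U 0 * V 0 * xB U m h ε₀ 0 / (m ^ 2 * U 0 ^ 2 - h ^ 2) := by
    simp only [AB, xB]
    rw [div_eq_div_iff (hrne 0 hJ0) (h1 0 hJ0).ne']
    linear_combination (-(ε₀ * m ^ 2 * U 0 * V 0)) * Real.sq_sqrt (h1 0 hJ0).le
  have hBeq : BBf U V m h ε₂ 0
      = -(ε₂ * h * rhoB U V m h 0) / (m * U 0 * (m ^ 2 * U 0 ^ 2 - h ^ 2)) := rfl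
  have hCeq : CBf U V m h ε₂ 0
      = ε₂ * m * U 0 * rhoB U V m h 0 / (m ^ 2 * U 0 ^ 2 - h ^ 2) := rfl
  have hnorm3sq : ∀ w : Fin 3 → ℝ, norm3 w ^ 2 = dot3 w w := by
    intro w
    have : 0 ≤ dot3 w w :=
      add_nonneg (add_nonneg (mul_self_nonneg _) (mul_self_nonneg _)) (mul_self_nonneg _)
    exact Real.sq_sqrt this
  have hkf : (k.factorial : ℝ) ≠ 0 := Nat.cast_ne_zero.2 k.factorial_ne_zero
  intro t
  obtain ⟨halg1, halg2, halg3⟩ := alg_all m h (U 0) (V 0) (xB U m h ε₀ 0) (rhoB U V m h 0)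
    (Real.cos (ε₁*t/m)) (Real.sin (ε₁*t/m)) ε₁ ε₂ (k.factorial : ℝ)
    (AB U V m h ε₀ 0) (BBf U V m h ε₂ 0) (CBf U V m h ε₂ 0)
    hm' (hUpos 0 hJ0).ne' (h1 0 hJ0).ne' hQ0 hρ0
    (Real.sin_sq_add_cos_sq (ε₁*t/m)) he1sq he2sq hAeq hBeq hCeq
  have HG1 : dot3 (deriv (fun t' => PsiB U V k m h ε₀ ε₁ ε₂ 0 t') t)
      (iteratedDeriv (k + 1) (fun s' => PsiB U V k m h ε₀ ε₁ ε₂ s' t) 0) = 0 := by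
    rw [(hPsit t).deriv, hKey t, hG0 t]
    simp only [dot3, Pi.smul_apply, smul_eq_mul, Matrix.cons_val_zero, Matrix.cons_val_one,
      Matrix.cons_val_two, Matrix.head_cons, Matrix.tail_cons]
    linear_combination halg1
  have HG2 : norm3 (cross3 (deriv (fun t' => PsiB U V k m h ε₀ ε₁ ε₂ 0 t') t)
      (iteratedDeriv (k + 1) (fun s' => PsiB U V k m h ε₀ ε₁ ε₂ s' t) 0)) ^ 2
      = (k.factorial : ℝ) ^ 2 * U 0 ^ 2 := by
    rw [hnorm3sq, (hPsit t).deriv, hKey t, hG0 t]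
    simp only [dot3, cross3, Pi.smul_apply, smul_eq_mul, Matrix.cons_val_zero,
      Matrix.cons_val_one, Matrix.cons_val_two, Matrix.head_cons, Matrix.tail_cons]
    linear_combination halg2
  have HG3 : det3 (deriv (fun t' => PsiB U V k m h ε₀ ε₁ ε₂ 0 t') t)
      (iteratedDeriv (k + 1) (fun s' => PsiB U V k m h ε₀ ε₁ ε₂ s' t) 0)
      (deriv (fun t' => iteratedDeriv (k + 1)
        (fun s' => PsiB U V k m h ε₀ ε₁ ε₂ s' t') 0) t)
      = h * (k.factorial : ℝ) ^ 2 / m ^ 2 := by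
    rw [(hPsit t).deriv, (hWt t).deriv, hKey t, hG0 t]
    simp only [det3, Pi.smul_apply, smul_eq_mul, Matrix.cons_val_zero, Matrix.cons_val_one,
      Matrix.cons_val_two, Matrix.head_cons, Matrix.tail_cons]
    linear_combination halg3
  refine ⟨HG1, HG2, HG3, ?_⟩
  rw [HG1, HG2, HG3]
  rw [zero_mul, zero_div, sub_zero]
  have hU0ne : U 0 ≠ 0 := (hUpos 0 hJ0).ne'
  field_simp

end
end

section
/- Let a > 0 and b ∈ ℝ, and consider the open set Ω := {(h,m) ∈ ℝ² : m > 0 and m²a² − h² − m⁴a²b² > 0}. Define ψ : Ω → ℝ² by ψ(h,m) := (√(m²a² − h² − m⁴a²b²)/(m²a²), h/(m²a²)). Then at every (h,m) ∈ Ω, the Jacobian determinant det[[∂ψ₁/∂h, ∂ψ₁/∂m],[∂ψ₂/∂h, ∂ψ₂/∂m]] equals 1/(m³·a²·√(m²a² − h² − m⁴a²b²)); in particular it is nonzero, so ψ is a local diffeomorphism at every point of Ω. -/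
noncomputable section

open Real

/-- First component of `ψ`: the limiting normal curvature `√(m²a² − h² − m⁴a²b²)/(m²a²)`. -/
def psi1 (a b : ℝ) (h m : ℝ) : ℝ :=
  Real.sqrt (m ^ 2 * a ^ 2 - h ^ 2 - m ^ 4 * a ^ 2 * b ^ 2) / (m ^ 2 * a ^ 2)

/-- Second component of `ψ`: the cusp-directional torsion `h/(m²a²)`. -/
def psi2 (a : ℝ) (h m : ℝ) : ℝ := h / (m ^ 2 * a ^ 2)

/-! Write `D = m²a² − h² − m⁴a²b²`. In `∂ψ₁/∂m` the `b`-dependence disappears because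
`m ∂D/∂m − 4D = 4h² − 2m²a²`, and in the Jacobian determinant the `h²` terms cancel,
leaving `m²a² / (m⁵a⁴√D)`. -/

lemma hasDerivAt_sq_mul_const (x c : ℝ) : HasDerivAt (fun y => y ^ 2 * c) (2 * x * c) x := by
  simpa using (hasDerivAt_pow 2 x).mul_const c

section PartialDerivatives

variable {a b h m : ℝ}

lemma ne_zero_of_radicand_pos (hD : 0 < m ^ 2 * a ^ 2 - h ^ 2 - m ^ 4 * a ^ 2 * b ^ 2) :
    m ≠ 0 ∧ a ≠ 0 := by
  constructor <;> rintro rfl <;> nlinarith [sq_nonneg h]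

lemma hasDerivAt_psi1_fst (hD : 0 < m ^ 2 * a ^ 2 - h ^ 2 - m ^ 4 * a ^ 2 * b ^ 2) :
    HasDerivAt (fun h' => psi1 a b h' m)
      (-h / (m ^ 2 * a ^ 2 * √(m ^ 2 * a ^ 2 - h ^ 2 - m ^ 4 * a ^ 2 * b ^ 2))) h := by
  have hrad : HasDerivAt (fun h' => m ^ 2 * a ^ 2 - h' ^ 2 - m ^ 4 * a ^ 2 * b ^ 2) (-(2 * h)) h := by
    simpa using ((hasDerivAt_pow 2 h).const_sub _).sub_const (m ^ 4 * a ^ 2 * b ^ 2)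
  refine ((hrad.sqrt hD.ne').div_const (m ^ 2 * a ^ 2)).congr_deriv ?_
  field_simp

lemma hasDerivAt_psi1_snd (hD : 0 < m ^ 2 * a ^ 2 - h ^ 2 - m ^ 4 * a ^ 2 * b ^ 2) :
    HasDerivAt (fun m' => psi1 a b h m')
      ((2 * h ^ 2 - m ^ 2 * a ^ 2) /
        (m ^ 3 * a ^ 2 * √(m ^ 2 * a ^ 2 - h ^ 2 - m ^ 4 * a ^ 2 * b ^ 2))) m := by
  obtain ⟨hm, ha⟩ := ne_zero_of_radicand_pos hD
  have hrad : HasDerivAt (fun m' => m' ^ 2 * a ^ 2 - h ^ 2 - m' ^ 4 * a ^ 2 * b ^ 2)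
      (2 * m * a ^ 2 - 4 * m ^ 3 * a ^ 2 * b ^ 2) m := by
    refine ((((hasDerivAt_pow 2 m).mul_const (a ^ 2)).sub_const (h ^ 2)).sub
      (((hasDerivAt_pow 4 m).mul_const (a ^ 2)).mul_const (b ^ 2))).congr_deriv ?_
    push_cast
    ring
  refine ((hrad.sqrt hD.ne').div (hasDerivAt_sq_mul_const m (a ^ 2)) (by positivity)).congr_deriv ?_
  have hsq := Real.sq_sqrt hD.le
  field_simp
  linear_combination (-4) * hsq

lemma hasDerivAt_psi2_fst : HasDerivAt (fun h' => psi2 a h' m) (1 / (m ^ 2 * a ^ 2)) h :=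
  (hasDerivAt_id h).div_const _

lemma hasDerivAt_psi2_snd (hm : m ≠ 0) (ha : a ≠ 0) :
    HasDerivAt (fun m' => psi2 a h m') (-2 * h / (m ^ 3 * a ^ 2)) m := by
  refine ((hasDerivAt_const m h).div (hasDerivAt_sq_mul_const m (a ^ 2)) (by positivity)).congr_deriv ?_
  field_simp
  ring

end PartialDerivatives

theorem stmt8_general (a b : ℝ) :
    ∀ h m : ℝ, 0 < m → 0 < m ^ 2 * a ^ 2 - h ^ 2 - m ^ 4 * a ^ 2 * b ^ 2 →
      deriv (fun h' => psi1 a b h' m) h * deriv (fun m' => psi2 a h m') m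
          - deriv (fun m' => psi1 a b h m') m * deriv (fun h' => psi2 a h' m) h
        = 1 / (m ^ 3 * a ^ 2 * Real.sqrt (m ^ 2 * a ^ 2 - h ^ 2 - m ^ 4 * a ^ 2 * b ^ 2))
      ∧ deriv (fun h' => psi1 a b h' m) h * deriv (fun m' => psi2 a h m') m
          - deriv (fun m' => psi1 a b h m') m * deriv (fun h' => psi2 a h' m) h ≠ 0 := by
  intro h m _ hD
  obtain ⟨hm, ha⟩ := ne_zero_of_radicand_pos hD
  have hdet : deriv (fun h' => psi1 a b h' m) h * deriv (fun m' => psi2 a h m') m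
      - deriv (fun m' => psi1 a b h m') m * deriv (fun h' => psi2 a h' m) h
        = 1 / (m ^ 3 * a ^ 2 * Real.sqrt (m ^ 2 * a ^ 2 - h ^ 2 - m ^ 4 * a ^ 2 * b ^ 2)) := by
    rw [(hasDerivAt_psi1_fst hD).deriv, (hasDerivAt_psi2_snd hm ha).deriv,
      (hasDerivAt_psi1_snd hD).deriv, hasDerivAt_psi2_fst.deriv]
    field_simp
    ring
  exact ⟨hdet, hdet ▸ by positivity⟩

/-- On `Ω = {(h,m) : m > 0, m²a² − h² − m⁴a²b² > 0}`, the Jacobian determinant of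
`ψ = (ψ₁, ψ₂)` equals `1/(m³a²√(m²a² − h² − m⁴a²b²))`; in particular it is nonzero
(so `ψ` is a local diffeomorphism at every point of `Ω`). -/
theorem stmt8 (a b : ℝ) (ha : 0 < a) :
    ∀ h m : ℝ, 0 < m → 0 < m ^ 2 * a ^ 2 - h ^ 2 - m ^ 4 * a ^ 2 * b ^ 2 →
      deriv (fun h' => psi1 a b h' m) h * deriv (fun m' => psi2 a h m') m
          - deriv (fun m' => psi1 a b h m') m * deriv (fun h' => psi2 a h' m) h
        = 1 / (m ^ 3 * a ^ 2 * Real.sqrt (m ^ 2 * a ^ 2 - h ^ 2 - m ^ 4 * a ^ 2 * b ^ 2))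
      ∧ deriv (fun h' => psi1 a b h' m) h * deriv (fun m' => psi2 a h m') m
          - deriv (fun m' => psi1 a b h m') m * deriv (fun h' => psi2 a h' m) h ≠ 0 :=
  stmt8_general a b

end
end

section
/- For every t ∈ ℝ: det(Ψ_t, ∂_s^{k+1}Ψ, ∂_s^{k+2}Ψ)(0,t) = ε₁·ε₂·k!·m²·U(0)²·U^{(k+2)}(0)/ρ(0). Consequently, writing n = k+1, the (n,n+1)-cuspidal curvature of Ψ at (0,t), namely ‖Ψ_t‖^{(n+1)/n}·det(Ψ_t, ∂_s^{n}Ψ, ∂_s^{n+1}Ψ)/‖Ψ_t × ∂_s^{n}Ψ‖^{(2n+1)/n} evaluated at (0,t), equals ε₁·ε₂·m²·U(0)·U^{(n+1)}(0)/(((n−1)!)^{(n+1)/n}·ρ(0)). -/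
noncomputable section

set_option maxHeartbeats 1600000
open Real Filter
open scoped ContDiff

lemma one_le_inf : (∞ : WithTop ℕ∞) ≠ 0 := by simp

lemma exists_smooth_germ {f : ℝ → ℝ} {s : Set ℝ} (hso : IsOpen s) (h0 : (0:ℝ) ∈ s)
    (hf : ContDiffOn ℝ ∞ f s) :
    ∃ g : ℝ → ℝ, ContDiff ℝ ∞ g ∧ g =ᶠ[nhds 0] f := by
  obtain ⟨r, hr, hball⟩ := Metric.isOpen_iff.1 hso 0 h0
  have hrpos : 0 < r := hr
  let φ : ContDiffBump (0:ℝ) := ⟨r/3, r/2, by positivity, by linarith⟩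
  refine ⟨fun x => φ x * f x, ?_, ?_⟩
  · rw [contDiff_iff_contDiffAt]
    intro x
    by_cases hx : x ∈ Metric.ball (0:ℝ) r
    · exact ((φ.contDiff).contDiffAt).mul
        ((hf x (hball hx)).contDiffAt (hso.mem_nhds (hball hx)))
    · have hxt : x ∉ tsupport (φ : ℝ → ℝ) := by
        rw [φ.tsupport_eq]
        intro hmem
        have : |x| ≤ r/2 := by simpa [Real.dist_eq] using hmem
        exact hx (by simp [Real.dist_eq]; linarith [abs_nonneg x])
      have : ∀ᶠ y in nhds x, φ y * f y = 0 := by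
        filter_upwards [(isOpen_compl_iff.2 (isClosed_tsupport _)).mem_nhds hxt] with y hy
        rw [image_eq_zero_of_notMem_tsupport hy, zero_mul]
      exact (contDiffAt_const (c := (0:ℝ))).congr_of_eventuallyEq this
  · filter_upwards [φ.eventuallyEq_one] with y hy
    simp only [hy, Pi.one_apply, one_mul]

lemma contDiff_deriv_inf {f : ℝ → ℝ} (hf : ContDiff ℝ ∞ f) : ContDiff ℝ ∞ (deriv f) :=
  (contDiff_infty_iff_deriv.1 hf).2

lemma iteratedDeriv_pow_mul (k : ℕ) (W : ℝ → ℝ) (hW : ContDiff ℝ ∞ W) :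
    iteratedDeriv k (fun s => s ^ k * W s) 0 = k.factorial * W 0 ∧
    iteratedDeriv (k+1) (fun s => s ^ k * W s) 0 = (k+1).factorial * deriv W 0 := by
  induction k generalizing W with
  | zero =>
    constructor
    · simp
    · rw [iteratedDeriv_one]
      simp only [pow_zero, one_mul, Nat.factorial_one, Nat.cast_one]
      norm_num
  | succ k ih =>
    have hW' : ContDiff ℝ ∞ (deriv W) := contDiff_deriv_inf hW
    set Wt : ℝ → ℝ := fun s => (k+1 : ℝ) * W s + s * deriv W s with hWt
    have hWtc : ContDiff ℝ ∞ Wt := (contDiff_const.mul hW).add (contDiff_id.mul hW')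
    have hder : deriv (fun s : ℝ => s ^ (k+1) * W s) = fun s => s ^ k * Wt s := by
      funext s
      have h1 : HasDerivAt (fun s : ℝ => s ^ (k+1) * W s)
          ((k+1 : ℕ) * s ^ k * W s + s ^ (k+1) * deriv W s) s :=
        (hasDerivAt_pow (k+1) s).mul (hW.differentiable one_le_inf s).hasDerivAt
      rw [h1.deriv, hWt]
      push_cast
      ring
    have hWt0 : Wt 0 = (k+1 : ℝ) * W 0 := by simp [hWt]
    have hWt' : deriv Wt 0 = (k+2 : ℝ) * deriv W 0 := by
      have h2 := (hasDerivAt_id (0:ℝ)).mul ((hW'.differentiable one_le_inf 0).hasDerivAt)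
      have h1 := (((hW.differentiable one_le_inf 0).hasDerivAt).const_mul ((k:ℝ)+1)).add h2
      have h1' : HasDerivAt Wt
          ((↑k + 1) * deriv W 0 + (1 * deriv W 0 + id 0 * deriv (deriv W) 0)) 0 := h1
      rw [h1'.deriv]; simp; ring
    obtain ⟨ihA, ihB⟩ := ih Wt hWtc
    constructor
    · rw [iteratedDeriv_succ', hder, ihA, hWt0, Nat.factorial_succ]
      push_cast; ring
    · rw [iteratedDeriv_succ', hder, ihB, hWt']
      rw [Nat.factorial_succ (k+1)]
      push_cast; ring

lemma iteratedDeriv_pi_apply {n : ℕ} {f : ℝ → Fin 3 → ℝ} (hf : ContDiff ℝ ∞ f) (x : ℝ)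
    (i : Fin 3) : iteratedDeriv n f x i = iteratedDeriv n (fun s => f s i) x := by
  have h := (ContinuousLinearMap.proj (R := ℝ) (φ := fun _ : Fin 3 => ℝ) i).iteratedFDeriv_comp_left
    (hf.contDiffAt (x := x)) (i := n) (by exact_mod_cast le_top)
  have h2 : (fun s => f s i) = (ContinuousLinearMap.proj (R := ℝ) (φ := fun _ : Fin 3 => ℝ) i) ∘ f :=
    rfl
  rw [iteratedDeriv_eq_iteratedFDeriv, iteratedDeriv_eq_iteratedFDeriv, h2, h]
  rfl


/-- `det(Ψ_t, ∂_s^{k+1}Ψ, ∂_s^{k+2}Ψ)(0,t) = ε₁ε₂ k! m² U(0)² U^{(k+2)}(0)/ρ(0)`;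
consequently, with `n = k+1`, the `(n,n+1)`-cuspidal curvature of `Ψ` at `(0,t)` equals
`ε₁ε₂ m² U(0) U^{(n+1)}(0)/(((n−1)!)^{(n+1)/n} ρ(0))`. -/
theorem stmt9
    (k : ℕ) (hk : 1 ≤ k)
    (J : Set ℝ) (hJo : IsOpen J) (hJc : Convex ℝ J) (hJ0 : (0:ℝ) ∈ J)
    (U V : ℝ → ℝ) (hU : ContDiff ℝ (⊤ : ℕ∞) U) (hV : ContDiff ℝ (⊤ : ℕ∞) V)
    (hUpos : ∀ s ∈ J, 0 < U s) (hU' : ∀ s ∈ J, deriv U s = s ^ k * V s)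
    (m h : ℝ) (hm : 0 < m)
    (h1 : ∀ s ∈ J, 0 < m ^ 2 * U s ^ 2 - h ^ 2)
    (h2 : ∀ s ∈ J, 0 < m ^ 2 * U s ^ 2 - h ^ 2 - m ^ 4 * U s ^ 2 * V s ^ 2)
    (ε₀ ε₁ ε₂ : ℝ) (he0 : ε₀ = 1 ∨ ε₀ = -1) (he1 : ε₁ = 1 ∨ ε₁ = -1)
    (he2 : ε₂ = 1 ∨ ε₂ = -1) :
    ∀ t : ℝ,
      det3 (deriv (fun t' => PsiB U V k m h ε₀ ε₁ ε₂ 0 t') t)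
          (iteratedDeriv (k + 1) (fun s' => PsiB U V k m h ε₀ ε₁ ε₂ s' t) 0)
          (iteratedDeriv (k + 2) (fun s' => PsiB U V k m h ε₀ ε₁ ε₂ s' t) 0)
        = ε₁ * ε₂ * (k.factorial : ℝ) * m ^ 2 * U 0 ^ 2 * iteratedDeriv (k + 2) U 0
            / rhoB U V m h 0
      ∧ norm3 (deriv (fun t' => PsiB U V k m h ε₀ ε₁ ε₂ 0 t') t)
              ^ (((k : ℝ) + 2) / ((k : ℝ) + 1))
            * det3 (deriv (fun t' => PsiB U V k m h ε₀ ε₁ ε₂ 0 t') t)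
                (iteratedDeriv (k + 1) (fun s' => PsiB U V k m h ε₀ ε₁ ε₂ s' t) 0)
                (iteratedDeriv (k + 2) (fun s' => PsiB U V k m h ε₀ ε₁ ε₂ s' t) 0)
            / norm3 (cross3 (deriv (fun t' => PsiB U V k m h ε₀ ε₁ ε₂ 0 t') t)
                (iteratedDeriv (k + 1) (fun s' => PsiB U V k m h ε₀ ε₁ ε₂ s' t) 0))
              ^ ((2 * (k : ℝ) + 3) / ((k : ℝ) + 1))
          = ε₁ * ε₂ * m ^ 2 * U 0 * iteratedDeriv (k + 2) U 0
              / ((k.factorial : ℝ) ^ (((k : ℝ) + 2) / ((k : ℝ) + 1)) * rhoB U V m h 0) := by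
  intro t
  have hUs : ContDiff ℝ ∞ U := hU.of_le (by simp)
  have hVs : ContDiff ℝ ∞ V := hV.of_le (by simp)
  have hJn : J ∈ nhds (0:ℝ) := hJo.mem_nhds hJ0
  have hm' : m ≠ 0 := hm.ne'
  -- basic functions
  set ρ : ℝ → ℝ := rhoB U V m h with hρdef
  set sq : ℝ → ℝ := fun s => Real.sqrt (m ^ 2 * U s ^ 2 - h ^ 2) with hsqdef
  set X : ℝ → ℝ := xB U m h ε₀ with hXdef
  set τ : ℝ := ε₁ * t / m with hτdef
  set Φ : ℝ → ℝ := fun s =>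
    -(ε₂ * h / m) * ∫ ζ in (0:ℝ)..s,
      ζ ^ k * rhoB U V m h ζ / (U ζ * (m ^ 2 * U ζ ^ 2 - h ^ 2)) with hΦdef
  set Z : ℝ → ℝ := zB U V k m h ε₂ with hZdef
  set a : ℝ → ℝ := fun s => ε₀ * m ^ 2 * U s * V s / sq s with hadef
  set b : ℝ → ℝ := fun s => ε₂ * m * U s * ρ s / (m ^ 2 * U s ^ 2 - h ^ 2) with hbdef
  set c : ℝ → ℝ := fun s =>
    -(ε₂ * h / m) * (ρ s / (U s * (m ^ 2 * U s ^ 2 - h ^ 2))) with hcdef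
  -- positivity facts
  have hsqpos : ∀ s ∈ J, 0 < sq s := fun s hs => Real.sqrt_pos.2 (h1 s hs)
  have hsqsq : ∀ s ∈ J, sq s ^ 2 = m ^ 2 * U s ^ 2 - h ^ 2 :=
    fun s hs => Real.sq_sqrt (h1 s hs).le
  have hρpos : ∀ s ∈ J, 0 < ρ s := fun s hs => Real.sqrt_pos.2 (h2 s hs)
  have hρsq : ∀ s ∈ J, ρ s ^ 2 = m ^ 2 * U s ^ 2 - h ^ 2 - m ^ 4 * U s ^ 2 * V s ^ 2 :=
    fun s hs => Real.sq_sqrt (h2 s hs).le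
  -- derivative of U
  have hUd : ∀ s ∈ J, HasDerivAt U (s ^ k * V s) s := fun s hs => by
    have hd := (hUs.differentiable one_le_inf s).hasDerivAt
    rwa [hU' s hs] at hd
  have hk0 : (0:ℝ) ^ k = 0 := zero_pow (by omega)
  have hU0d : HasDerivAt U 0 0 := by
    have := hUd 0 hJ0; rwa [hk0, zero_mul] at this
  have hV0d : HasDerivAt V (deriv V 0) 0 := (hVs.differentiable one_le_inf 0).hasDerivAt
  -- derivative of sq on J
  have hDd : ∀ s ∈ J, HasDerivAt (fun u => m ^ 2 * U u ^ 2 - h ^ 2)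
      (s ^ k * (2 * m ^ 2 * U s * V s)) s := fun s hs => by
    have h0 := (((hUd s hs).pow 2).const_mul (m ^ 2)).sub_const (h ^ 2)
    convert h0 using 1; (any_goals rfl); push_cast; ring
  have hsqd : ∀ s ∈ J, HasDerivAt sq (s ^ k * (m ^ 2 * U s * V s / sq s)) s := fun s hs => by
    have h3 := (Real.hasDerivAt_sqrt (h1 s hs).ne').comp s (hDd s hs)
    convert h3 using 1
    any_goals rfl
    have := (hsqpos s hs).ne'
    rw [hsqdef]
    field_simp
  have hXd : ∀ s ∈ J, HasDerivAt X (s ^ k * a s) s := fun s hs => by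
    have h3 := (hsqd s hs).const_mul ε₀
    have h4 : HasDerivAt X (ε₀ * (s ^ k * (m ^ 2 * U s * V s / sq s))) s := h3
    convert h4 using 1
    rw [hadef]; ring
  -- FTC
  have ftc : ∀ g : ℝ → ℝ, ContinuousOn g J → ∀ s ∈ J,
      HasDerivAt (fun u => ∫ ζ in (0:ℝ)..u, g ζ) (g s) s := by
    intro g hg s hs
    apply intervalIntegral.integral_hasDerivAt_right
    · apply (hg.mono _).intervalIntegrable
      exact (hJc.ordConnected).uIcc_subset hJ0 hs
    · exact hg.stronglyMeasurableAtFilter hJo s hs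
    · exact hg.continuousAt (hJo.mem_nhds hs)
  have hUcont : Continuous U := hUs.continuous
  have hρcont : Continuous ρ := by
    rw [hρdef]
    exact Real.continuous_sqrt.comp
      (((continuous_const.mul (hUcont.pow 2)).sub continuous_const).sub
        ((continuous_const.mul (hUcont.pow 2)).mul (hVs.continuous.pow 2)))
  have hgθcont : ContinuousOn
      (fun ζ => ζ ^ k * rhoB U V m h ζ / (U ζ * (m ^ 2 * U ζ ^ 2 - h ^ 2))) J := by
    apply ContinuousOn.div
    · exact ((continuous_pow k).mul hρcont).continuousOn
    · exact (hUcont.mul ((continuous_const.mul (hUcont.pow 2)).sub continuous_const)).continuousOn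
    · intro s hs
      exact mul_ne_zero (hUpos s hs).ne' (h1 s hs).ne'
  have hgzcont : ContinuousOn
      (fun ζ => ζ ^ k * U ζ * rhoB U V m h ζ / (m ^ 2 * U ζ ^ 2 - h ^ 2)) J := by
    apply ContinuousOn.div
    · exact (((continuous_pow k).mul hUcont).mul hρcont).continuousOn
    · exact ((continuous_const.mul (hUcont.pow 2)).sub continuous_const).continuousOn
    · intro s hs; exact (h1 s hs).ne'
  have hΦd : ∀ s ∈ J, HasDerivAt Φ (s ^ k * c s) s := fun s hs => by
    have h3 := (ftc _ hgθcont s hs).const_mul (-(ε₂ * h / m))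
    convert h3 using 1
    any_goals rfl
    rw [hcdef]; ring
  have hZd : ∀ s ∈ J, HasDerivAt Z (s ^ k * b s) s := fun s hs => by
    have h3 := (ftc _ hgzcont s hs).const_mul (ε₂ * m)
    have h4 : HasDerivAt Z
        (ε₂ * m * (s ^ k * U s * rhoB U V m h s / (m ^ 2 * U s ^ 2 - h ^ 2))) s := h3
    convert h4 using 1
    rw [hbdef]; ring
  have hΦ0 : Φ 0 = 0 := by rw [hΦdef]; simp
  have hZ0 : Z 0 = 0 := by rw [hZdef, zB]; simp
  -- theta decomposition
  have hθeq : ∀ s, thetaB U V k m h ε₁ ε₂ s t = τ + Φ s := by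
    intro s
    rw [thetaB, hτdef, hΦdef]
    ring
  -- components of Psi as functions of s
  set Ψ₁ : ℝ → ℝ := fun s => X s * Real.cos (τ + Φ s) with hΨ₁def
  set Ψ₂ : ℝ → ℝ := fun s => X s * Real.sin (τ + Φ s) with hΨ₂def
  set Ψ₃ : ℝ → ℝ := fun s => Z s + h * (τ + Φ s) with hΨ₃def
  have hPsi : (fun s => PsiB U V k m h ε₀ ε₁ ε₂ s t) = fun s => ![Ψ₁ s, Ψ₂ s, Ψ₃ s] := by
    funext s
    rw [PsiB, hθeq s, hΨ₁def, hΨ₂def, hΨ₃def, hXdef, hZdef]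
  -- W functions
  set W₁ : ℝ → ℝ := fun s => a s * Real.cos (τ + Φ s) - X s * c s * Real.sin (τ + Φ s)
    with hW₁def
  set W₂ : ℝ → ℝ := fun s => a s * Real.sin (τ + Φ s) + X s * c s * Real.cos (τ + Φ s)
    with hW₂def
  set W₃ : ℝ → ℝ := fun s => b s + h * c s with hW₃def
  have hΨ₁d : ∀ s ∈ J, HasDerivAt Ψ₁ (s ^ k * W₁ s) s := fun s hs => by
    have h3 := (hXd s hs).mul (((hΦd s hs).const_add τ).cos)
    convert h3 using 1
    any_goals rfl
    rw [hW₁def]; ring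
  have hΨ₂d : ∀ s ∈ J, HasDerivAt Ψ₂ (s ^ k * W₂ s) s := fun s hs => by
    have h3 := (hXd s hs).mul (((hΦd s hs).const_add τ).sin)
    convert h3 using 1
    any_goals rfl
    rw [hW₂def]; ring
  have hΨ₃d : ∀ s ∈ J, HasDerivAt Ψ₃ (s ^ k * W₃ s) s := fun s hs => by
    have h3 := (hZd s hs).add (((hΦd s hs).const_add τ).const_mul h)
    convert h3 using 1
    any_goals rfl
    rw [hW₃def]; ring
  -- smoothness on J
  have hsqcd : ContDiffOn ℝ ∞ sq J := fun s hs =>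
    ((Real.contDiffAt_sqrt (h1 s hs).ne').comp s
      (((contDiff_const.mul (hUs.pow 2)).sub contDiff_const).contDiffAt)).contDiffWithinAt
  have hρcd : ContDiffOn ℝ ∞ ρ J := fun s hs =>
    ((Real.contDiffAt_sqrt (h2 s hs).ne').comp s
      ((((contDiff_const.mul (hUs.pow 2)).sub contDiff_const).sub
        ((contDiff_const.mul (hUs.pow 2)).mul (hVs.pow 2))).contDiffAt)).contDiffWithinAt
  have hXcd : ContDiffOn ℝ ∞ X J := contDiffOn_const.mul hsqcd
  have hacd : ContDiffOn ℝ ∞ a J := by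
    apply ContDiffOn.div
    · exact (((contDiff_const.mul hUs).mul hVs).contDiffOn)
    · exact hsqcd
    · exact fun s hs => (hsqpos s hs).ne'
  have hDcd : ContDiffOn ℝ ∞ (fun s => m ^ 2 * U s ^ 2 - h ^ 2) J :=
    ((contDiff_const.mul (hUs.pow 2)).sub contDiff_const).contDiffOn
  have hbcd : ContDiffOn ℝ ∞ b J := by
    apply ContDiffOn.div
    · exact ((contDiff_const.mul hUs).contDiffOn.mul hρcd)
    · exact hDcd
    · exact fun s hs => (h1 s hs).ne'
  have hccd : ContDiffOn ℝ ∞ c J := by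
    apply ContDiffOn.mul contDiffOn_const
    apply ContDiffOn.div hρcd (hUs.contDiffOn.mul hDcd)
    exact fun s hs => mul_ne_zero (hUpos s hs).ne' (h1 s hs).ne'
  have hcdOn : ∀ f : ℝ → ℝ, ∀ g : ℝ → ℝ, (∀ s ∈ J, HasDerivAt f (s ^ k * g s) s) →
      ContDiffOn ℝ ∞ g J → ContDiffOn ℝ ∞ f J := by
    intro f g hfd hgcd
    rw [contDiffOn_infty_iff_deriv_of_isOpen hJo]
    constructor
    · exact fun s hs => ((hfd s hs).differentiableAt).differentiableWithinAt
    · apply ContDiffOn.congr ((contDiff_id.pow k).contDiffOn.mul hgcd)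
      exact fun s hs => (hfd s hs).deriv
  have hΦcd : ContDiffOn ℝ ∞ Φ J := hcdOn Φ c hΦd hccd
  have hZcd : ContDiffOn ℝ ∞ Z J := hcdOn Z b hZd hbcd
  have hcoscd : ContDiffOn ℝ ∞ (fun s => Real.cos (τ + Φ s)) J :=
    Real.contDiff_cos.comp_contDiffOn (contDiffOn_const.add hΦcd)
  have hsincd : ContDiffOn ℝ ∞ (fun s => Real.sin (τ + Φ s)) J :=
    Real.contDiff_sin.comp_contDiffOn (contDiffOn_const.add hΦcd)
  have hΨ₁cd : ContDiffOn ℝ ∞ Ψ₁ J := hXcd.mul hcoscd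
  have hΨ₂cd : ContDiffOn ℝ ∞ Ψ₂ J := hXcd.mul hsincd
  have hΨ₃cd : ContDiffOn ℝ ∞ Ψ₃ J :=
    hZcd.add (contDiffOn_const.mul (contDiffOn_const.add hΦcd))
  have hW₁cd : ContDiffOn ℝ ∞ W₁ J := (hacd.mul hcoscd).sub ((hXcd.mul hccd).mul hsincd)
  have hW₂cd : ContDiffOn ℝ ∞ W₂ J := (hacd.mul hsincd).add ((hXcd.mul hccd).mul hcoscd)
  have hW₃cd : ContDiffOn ℝ ∞ W₃ J := hbcd.add (contDiffOn_const.mul hccd)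
  -- smooth germs
  obtain ⟨G₁, hG₁s, hG₁e⟩ := exists_smooth_germ hJo hJ0 hW₁cd
  obtain ⟨G₂, hG₂s, hG₂e⟩ := exists_smooth_germ hJo hJ0 hW₂cd
  obtain ⟨G₃, hG₃s, hG₃e⟩ := exists_smooth_germ hJo hJ0 hW₃cd
  obtain ⟨P₁, hP₁s, hP₁e⟩ := exists_smooth_germ hJo hJ0 hΨ₁cd
  obtain ⟨P₂, hP₂s, hP₂e⟩ := exists_smooth_germ hJo hJ0 hΨ₂cd
  obtain ⟨P₃, hP₃s, hP₃e⟩ := exists_smooth_germ hJo hJ0 hΨ₃cd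
  set Pv : ℝ → Fin 3 → ℝ := fun s => ![P₁ s, P₂ s, P₃ s] with hPvdef
  have hPvs : ContDiff ℝ ∞ Pv := by
    rw [contDiff_pi]
    intro i
    fin_cases i
    · exact hP₁s
    · exact hP₂s
    · exact hP₃s
  have hPve : (fun s' => PsiB U V k m h ε₀ ε₁ ε₂ s' t) =ᶠ[nhds 0] Pv := by
    rw [hPsi]
    filter_upwards [hP₁e, hP₂e, hP₃e] with s e1 e2 e3
    funext i
    fin_cases i
    · exact e1.symm
    · exact e2.symm
    · exact e3.symm
  have hvec : ∀ n : ℕ, iteratedDeriv n (fun s' => PsiB U V k m h ε₀ ε₁ ε₂ s' t) 0 =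
      ![iteratedDeriv n Ψ₁ 0, iteratedDeriv n Ψ₂ 0, iteratedDeriv n Ψ₃ 0] := by
    intro n
    rw [hPve.iteratedDeriv_eq n]
    funext i
    rw [iteratedDeriv_pi_apply hPvs 0 i]
    fin_cases i
    · show iteratedDeriv n (fun s => Pv s 0) 0 = iteratedDeriv n Ψ₁ 0
      have : (fun s => Pv s 0) = P₁ := by funext s; rw [hPvdef]; simp
      rw [this, hP₁e.iteratedDeriv_eq n]
    · show iteratedDeriv n (fun s => Pv s 1) 0 = iteratedDeriv n Ψ₂ 0
      have : (fun s => Pv s 1) = P₂ := by funext s; rw [hPvdef]; simp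
      rw [this, hP₂e.iteratedDeriv_eq n]
    · show iteratedDeriv n (fun s => Pv s 2) 0 = iteratedDeriv n Ψ₃ 0
      have : (fun s => Pv s 2) = P₃ := by funext s; rw [hPvdef]; simp
      rw [this, hP₃e.iteratedDeriv_eq n]
  -- derivative germs
  have hderegerm : ∀ Ψi : ℝ → ℝ, ∀ Wi : ℝ → ℝ, ∀ Gi : ℝ → ℝ,
      (∀ s ∈ J, HasDerivAt Ψi (s ^ k * Wi s) s) → (Gi =ᶠ[nhds 0] Wi) →
      deriv Ψi =ᶠ[nhds 0] fun s => s ^ k * Gi s := by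
    intro Ψi Wi Gi hd he
    filter_upwards [hJn, he] with s hs hes
    rw [(hd s hs).deriv, hes]
  have hiter1 : ∀ Ψi : ℝ → ℝ, ∀ Wi : ℝ → ℝ, ∀ Gi : ℝ → ℝ,
      (∀ s ∈ J, HasDerivAt Ψi (s ^ k * Wi s) s) → (Gi =ᶠ[nhds 0] Wi) → ContDiff ℝ ∞ Gi →
      iteratedDeriv (k + 1) Ψi 0 = k.factorial * Wi 0 := by
    intro Ψi Wi Gi hd he hs
    rw [iteratedDeriv_succ', (hderegerm Ψi Wi Gi hd he).iteratedDeriv_eq k,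
      (iteratedDeriv_pow_mul k Gi hs).1, he.self_of_nhds]
  have hiter2 : ∀ Ψi : ℝ → ℝ, ∀ Wi : ℝ → ℝ, ∀ Gi : ℝ → ℝ, ∀ di : ℝ,
      (∀ s ∈ J, HasDerivAt Ψi (s ^ k * Wi s) s) → (Gi =ᶠ[nhds 0] Wi) → ContDiff ℝ ∞ Gi →
      HasDerivAt Wi di 0 →
      iteratedDeriv (k + 2) Ψi 0 = (k + 1).factorial * di := by
    intro Ψi Wi Gi di hd he hs hdi
    have e1 : k + 2 = (k + 1) + 1 := rfl
    rw [e1, iteratedDeriv_succ', (hderegerm Ψi Wi Gi hd he).iteratedDeriv_eq (k + 1),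
      (iteratedDeriv_pow_mul k Gi hs).2]
    congr 1
    rw [he.deriv_eq, hdi.deriv]
  -- derivative values at 0
  set v' : ℝ := deriv V 0 with hv'def
  set ρd : ℝ := -(m ^ 4 * U 0 ^ 2 * V 0 * v') / ρ 0 with hρddef
  set a' : ℝ := ε₀ * m ^ 2 * U 0 * v' / sq 0 with ha'def
  set c' : ℝ := -(ε₂ * h / m) * (ρd / (U 0 * (m ^ 2 * U 0 ^ 2 - h ^ 2))) with hc'def
  set b' : ℝ := ε₂ * m * U 0 * ρd / (m ^ 2 * U 0 ^ 2 - h ^ 2) with hb'def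
  have hD0d : HasDerivAt (fun u => m ^ 2 * U u ^ 2 - h ^ 2) 0 0 := by
    have := hDd 0 hJ0; rwa [hk0, zero_mul] at this
  have hR0d : HasDerivAt (fun s => m ^ 2 * U s ^ 2 - h ^ 2 - m ^ 4 * U s ^ 2 * V s ^ 2)
      (-(2 * m ^ 4 * U 0 ^ 2 * V 0 * v')) 0 := by
    have h5 := hD0d.sub (((hU0d.pow 2).const_mul (m ^ 4)).mul (hV0d.pow 2))
    convert h5 using 1
    any_goals rfl
    rw [hv'def]; simp only [Pi.pow_apply]; push_cast; ring
  have hρ0d : HasDerivAt ρ ρd 0 := by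
    have h6 := (Real.hasDerivAt_sqrt (h2 0 hJ0).ne').comp 0 hR0d
    have hrr : Real.sqrt (m ^ 2 * U 0 ^ 2 - h ^ 2 - m ^ 4 * U 0 ^ 2 * V 0 ^ 2) = ρ 0 := rfl
    convert h6 using 1
    any_goals rfl
    rw [hρddef, hrr]
    have := (hρpos 0 hJ0).ne'
    field_simp
  have hsq0d : HasDerivAt sq 0 0 := by
    have := hsqd 0 hJ0; rwa [hk0, zero_mul] at this
  have hΦ0d : HasDerivAt Φ 0 0 := by
    have := hΦd 0 hJ0; rwa [hk0, zero_mul] at this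
  have hX0d : HasDerivAt X 0 0 := by
    have := hXd 0 hJ0; rwa [hk0, zero_mul] at this
  have ha0d : HasDerivAt a a' 0 := by
    have h7 := ((hU0d.const_mul (ε₀ * m ^ 2)).mul hV0d).div hsq0d (hsqpos 0 hJ0).ne'
    convert h7 using 1
    any_goals rfl
    rw [ha'def, hv'def]
    have := (hsqpos 0 hJ0).ne'
    field_simp
    ring
  have hb0d : HasDerivAt b b' 0 := by
    have h7 := ((hU0d.const_mul (ε₂ * m)).mul hρ0d).div hD0d (h1 0 hJ0).ne'
    convert h7 using 1
    any_goals rfl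
    rw [hb'def]
    have := (h1 0 hJ0).ne'
    field_simp
    ring
  have hc0d : HasDerivAt c c' 0 := by
    have h7 := ((hρ0d.div (hU0d.mul hD0d)
      (mul_ne_zero (hUpos 0 hJ0).ne' (h1 0 hJ0).ne')).const_mul (-(ε₂ * h / m)))
    convert h7 using 1
    any_goals rfl
    rw [hc'def]
    simp only [Pi.mul_apply]
    have hu := (hUpos 0 hJ0).ne'
    have hd := (h1 0 hJ0).ne'
    field_simp
    ring
  have hcos0d : HasDerivAt (fun s => Real.cos (τ + Φ s)) 0 0 := by
    have := (hΦ0d.const_add τ).cos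
    simpa using this
  have hsin0d : HasDerivAt (fun s => Real.sin (τ + Φ s)) 0 0 := by
    have := (hΦ0d.const_add τ).sin
    simpa using this
  set d₁ : ℝ := a' * Real.cos τ - X 0 * c' * Real.sin τ with hd₁def
  set d₂ : ℝ := a' * Real.sin τ + X 0 * c' * Real.cos τ with hd₂def
  set d₃ : ℝ := b' + h * c' with hd₃def
  have hW₁0d : HasDerivAt W₁ d₁ 0 := by
    have h7 := (ha0d.mul hcos0d).sub ((hX0d.mul hc0d).mul hsin0d)
    convert h7 using 1
    any_goals rfl
    rw [hd₁def, hΦ0, add_zero]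
    ring
  have hW₂0d : HasDerivAt W₂ d₂ 0 := by
    have h7 := (ha0d.mul hsin0d).add ((hX0d.mul hc0d).mul hcos0d)
    convert h7 using 1
    any_goals rfl
    rw [hd₂def, hΦ0, add_zero]
    ring
  have hW₃0d : HasDerivAt W₃ d₃ 0 := by
    have h7 := hb0d.add (hc0d.const_mul h)
    convert h7 using 1
    any_goals rfl
  -- the three vectors
  have hv2 : iteratedDeriv (k + 1) (fun s' => PsiB U V k m h ε₀ ε₁ ε₂ s' t) 0 =
      ![k.factorial * W₁ 0, k.factorial * W₂ 0, k.factorial * W₃ 0] := by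
    rw [hvec (k + 1), hiter1 Ψ₁ W₁ G₁ hΨ₁d hG₁e hG₁s, hiter1 Ψ₂ W₂ G₂ hΨ₂d hG₂e hG₂s,
      hiter1 Ψ₃ W₃ G₃ hΨ₃d hG₃e hG₃s]
  have hv3 : iteratedDeriv (k + 2) (fun s' => PsiB U V k m h ε₀ ε₁ ε₂ s' t) 0 =
      ![(k + 1).factorial * d₁, (k + 1).factorial * d₂, (k + 1).factorial * d₃] := by
    rw [hvec (k + 2), hiter2 Ψ₁ W₁ G₁ d₁ hΨ₁d hG₁e hG₁s hW₁0d,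
      hiter2 Ψ₂ W₂ G₂ d₂ hΨ₂d hG₂e hG₂s hW₂0d, hiter2 Ψ₃ W₃ G₃ d₃ hΨ₃d hG₃e hG₃s hW₃0d]
  have hθ0t : thetaB U V k m h ε₁ ε₂ 0 t = τ := by rw [hθeq 0, hΦ0, add_zero]
  have hθtd : HasDerivAt (fun t' => thetaB U V k m h ε₁ ε₂ 0 t') (ε₁ / m) t := by
    have h8 := (((hasDerivAt_id t).const_mul ε₁).sub_const
      (ε₂ * h * ∫ ζ in (0:ℝ)..(0:ℝ),
        ζ ^ k * rhoB U V m h ζ / (U ζ * (m ^ 2 * U ζ ^ 2 - h ^ 2)))).const_mul (1 / m)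
    have h9 : HasDerivAt (fun t' => thetaB U V k m h ε₁ ε₂ 0 t') (1 / m * (ε₁ * 1)) t := h8
    convert h9 using 1
    field_simp
  have hv1 : deriv (fun t' => PsiB U V k m h ε₀ ε₁ ε₂ 0 t') t =
      ![-(X 0 * Real.sin τ) * (ε₁ / m), X 0 * Real.cos τ * (ε₁ / m), h * (ε₁ / m)] := by
    apply HasDerivAt.deriv
    refine hasDerivAt_pi.2 ?_
    intro i
    fin_cases i
    · show HasDerivAt (fun t' => X 0 * Real.cos (thetaB U V k m h ε₁ ε₂ 0 t'))
        (-(X 0 * Real.sin τ) * (ε₁ / m)) t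
      have h8 := (hθtd.cos).const_mul (X 0)
      convert h8 using 1
      any_goals rfl
      rw [hθ0t]; ring
    · show HasDerivAt (fun t' => X 0 * Real.sin (thetaB U V k m h ε₁ ε₂ 0 t'))
        (X 0 * Real.cos τ * (ε₁ / m)) t
      have h8 := (hθtd.sin).const_mul (X 0)
      convert h8 using 1
      any_goals rfl
      rw [hθ0t]; ring
    · show HasDerivAt (fun t' => zB U V k m h ε₂ 0 + h * thetaB U V k m h ε₁ ε₂ 0 t')
        (h * (ε₁ / m)) t
      exact (hθtd.const_mul h).const_add (zB U V k m h ε₂ 0)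
  -- iterated derivative of U
  have hUk2 : iteratedDeriv (k + 2) U 0 = (k + 1).factorial * v' := by
    have hUd' : deriv U =ᶠ[nhds 0] fun s => s ^ k * V s := by
      filter_upwards [hJn] with s hs
      rw [hU' s hs]
    have e1 : k + 2 = (k + 1) + 1 := rfl
    rw [e1, iteratedDeriv_succ', hUd'.iteratedDeriv_eq (k + 1),
      (iteratedDeriv_pow_mul k V hVs).2, hv'def]
  -- value lemmas
  have hX0v : X 0 = ε₀ * sq 0 := rfl
  have ha0v : a 0 = ε₀ * m ^ 2 * U 0 * V 0 / sq 0 := rfl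
  have hb0v : b 0 = ε₂ * m * U 0 * ρ 0 / (m ^ 2 * U 0 ^ 2 - h ^ 2) := rfl
  have hc0v : c 0 = -(ε₂ * h / m) * (ρ 0 / (U 0 * (m ^ 2 * U 0 ^ 2 - h ^ 2))) := rfl
  have hW₁0 : W₁ 0 = a 0 * Real.cos τ - X 0 * c 0 * Real.sin τ := by
    have e : W₁ 0 = a 0 * Real.cos (τ + Φ 0) - X 0 * c 0 * Real.sin (τ + Φ 0) := rfl
    rwa [hΦ0, add_zero] at e
  have hW₂0 : W₂ 0 = a 0 * Real.sin τ + X 0 * c 0 * Real.cos τ := by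
    have e : W₂ 0 = a 0 * Real.sin (τ + Φ 0) + X 0 * c 0 * Real.cos (τ + Φ 0) := rfl
    rwa [hΦ0, add_zero] at e
  have hW₃0 : W₃ 0 = b 0 + h * c 0 := rfl
  -- numeric facts at 0
  have hq2 := hsqsq 0 hJ0
  have hr2 := hρsq 0 hJ0
  have hqpos := hsqpos 0 hJ0
  have hrpos := hρpos 0 hJ0
  have hupos := hUpos 0 hJ0
  have hD0 := h1 0 hJ0
  have hcs : Real.sin τ ^ 2 + Real.cos τ ^ 2 = 1 := Real.sin_sq_add_cos_sq τ
  have hKpos : (0:ℝ) < (k.factorial : ℝ) := by exact_mod_cast k.factorial_pos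
  have he0sq : ε₀ ^ 2 = 1 := by rcases he0 with rfl | rfl <;> norm_num
  have he1sq : ε₁ ^ 2 = 1 := by rcases he1 with rfl | rfl <;> norm_num
  have he2sq : ε₂ ^ 2 = 1 := by rcases he2 with rfl | rfl <;> norm_num
  have hsum : ρ 0 ^ 2 + m ^ 4 * U 0 ^ 2 * V 0 ^ 2 = m ^ 2 * U 0 ^ 2 - h ^ 2 := by
    rw [hr2]; ring
  -- shrink the context for the final algebra
  clear_value ρ sq X τ Φ Z a b c Ψ₁ Ψ₂ Ψ₃ W₁ W₂ W₃ Pv v' ρd a' c' b' d₁ d₂ d₃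
  try clear hUd
  try clear hDd
  try clear hsqd
  try clear hXd
  try clear ftc
  try clear hUcont
  try clear hρcont
  try clear hgθcont
  try clear hgzcont
  try clear hΦd
  try clear hZd
  try clear hθeq
  try clear hPsi
  try clear hΨ₁d
  try clear hΨ₂d
  try clear hΨ₃d
  try clear hsqcd
  try clear hρcd
  try clear hXcd
  try clear hacd
  try clear hDcd
  try clear hbcd
  try clear hccd
  try clear hcdOn
  try clear hΦcd
  try clear hZcd
  try clear hcoscd
  try clear hsincd
  try clear hΨ₁cd
  try clear hΨ₂cd
  try clear hΨ₃cd
  try clear hW₁cd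
  try clear hW₂cd
  try clear hW₃cd
  try clear hG₁s
  try clear hG₁e
  try clear hG₂s
  try clear hG₂e
  try clear hG₃s
  try clear hG₃e
  try clear hP₁s
  try clear hP₁e
  try clear hP₂s
  try clear hP₂e
  try clear hP₃s
  try clear hP₃e
  try clear hPvs
  try clear hPve
  try clear hvec
  try clear hderegerm
  try clear hiter1
  try clear hiter2
  try clear hD0d
  try clear hR0d
  try clear hρ0d
  try clear hsq0d
  try clear hΦ0d
  try clear hX0d
  try clear ha0d
  try clear hb0d
  try clear hc0d
  try clear hcos0d
  try clear hsin0d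
  try clear hW₁0d
  try clear hW₂0d
  try clear hW₃0d
  try clear hθ0t
  try clear hθtd
  try clear hU0d
  try clear hV0d
  try clear hρsq
  try clear hsqsq
  try clear hρpos
  try clear hsqpos
  try clear hΦ0
  try clear hZ0
  try clear hU
  try clear hV
  try clear hUpos
  try clear hU'
  try clear h1
  try clear h2
  try clear hUs
  try clear hVs
  try clear hPvdef
  try clear hsqdef
  try clear hρdef
  try clear hXdef
  try clear hτdef
  try clear hΦdef
  try clear hZdef
  try clear hΨ₁def
  try clear hΨ₂def
  try clear hΨ₃def
  try clear hadef
  try clear hbdef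
  try clear hcdef
  try clear hW₁def
  try clear hW₂def
  try clear hW₃def
  try clear hv'def
  try clear hk0
  try clear hJn
  try clear hJc
  try clear hJo
  try clear hJ0
  try clear hk
  try clear G₁
  try clear G₂
  try clear G₃
  try clear P₁
  try clear P₂
  try clear P₃
  try clear Pv
  try clear Φ
  try clear Z
  try clear Ψ₁
  try clear Ψ₂
  try clear Ψ₃
  try clear J
  -- the core determinant quantity
  have key : (v' * ρ 0 - V 0 * ρd) * ρ 0 = v' * (m ^ 2 * U 0 ^ 2 - h ^ 2) := by
    have e : V 0 * ρd * ρ 0 = -(m ^ 4 * U 0 ^ 2 * V 0 ^ 2 * v') := by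
      rw [hρddef]; field_simp [hrpos.ne']
    calc (v' * ρ 0 - V 0 * ρd) * ρ 0 = v' * ρ 0 ^ 2 - V 0 * ρd * ρ 0 := by ring
      _ = v' * ρ 0 ^ 2 + m ^ 4 * U 0 ^ 2 * V 0 ^ 2 * v' := by rw [e]; ring
      _ = v' * (m ^ 2 * U 0 ^ 2 - h ^ 2) := by rw [hr2]; ring
  have hcore : X 0 * (a' * b 0 - a 0 * b') = ε₂ * m ^ 3 * U 0 ^ 2 * v' / ρ 0 := by
    have step : X 0 * (a' * b 0 - a 0 * b') =
        ε₀ ^ 2 * ε₂ * m ^ 3 * U 0 ^ 2 * (v' * ρ 0 - V 0 * ρd) / (m ^ 2 * U 0 ^ 2 - h ^ 2) := by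
      rw [hX0v, ha'def, hb'def, ha0v, hb0v]
      field_simp
    rw [step, he0sq, one_mul, div_eq_div_iff hD0.ne' hrpos.ne']
    linear_combination (ε₂ * m ^ 3 * U 0 ^ 2) * key
  -- the determinant
  have hdet : det3 (deriv (fun t' => PsiB U V k m h ε₀ ε₁ ε₂ 0 t') t)
      (iteratedDeriv (k + 1) (fun s' => PsiB U V k m h ε₀ ε₁ ε₂ s' t) 0)
      (iteratedDeriv (k + 2) (fun s' => PsiB U V k m h ε₀ ε₁ ε₂ s' t) 0)
      = ε₁ * ε₂ * (k.factorial : ℝ) * m ^ 2 * U 0 ^ 2 * (((k+1).factorial : ℝ) * v') / ρ 0 := by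
    rw [hv1, hv2, hv3]
    have expand : det3
        ![-(X 0 * Real.sin τ) * (ε₁ / m), X 0 * Real.cos τ * (ε₁ / m), h * (ε₁ / m)]
        ![(k.factorial : ℝ) * W₁ 0, (k.factorial : ℝ) * W₂ 0, (k.factorial : ℝ) * W₃ 0]
        ![((k+1).factorial : ℝ) * d₁, ((k+1).factorial : ℝ) * d₂, ((k+1).factorial : ℝ) * d₃]
        = (Real.sin τ ^ 2 + Real.cos τ ^ 2) *
          ((ε₁ / m) * (k.factorial : ℝ) * ((k+1).factorial : ℝ) *
            (X 0 * (a' * b 0 - a 0 * b'))) := by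
      simp only [det3, Matrix.cons_val_zero, Matrix.cons_val_one, Matrix.head_cons,
        Matrix.cons_val_two, Matrix.tail_cons]
      rw [hW₁0, hW₂0, hW₃0, hd₁def, hd₂def, hd₃def]
      ring
    rw [expand, hcs, one_mul, hcore]
    field_simp
  -- norm of Psi_t
  have hn1 : norm3 (deriv (fun t' => PsiB U V k m h ε₀ ε₁ ε₂ 0 t') t) = U 0 := by
    rw [hv1, norm3]
    have hdot : dot3
        ![-(X 0 * Real.sin τ) * (ε₁ / m), X 0 * Real.cos τ * (ε₁ / m), h * (ε₁ / m)]
        ![-(X 0 * Real.sin τ) * (ε₁ / m), X 0 * Real.cos τ * (ε₁ / m), h * (ε₁ / m)]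
        = U 0 ^ 2 := by
      have i1 : dot3
          ![-(X 0 * Real.sin τ) * (ε₁ / m), X 0 * Real.cos τ * (ε₁ / m), h * (ε₁ / m)]
          ![-(X 0 * Real.sin τ) * (ε₁ / m), X 0 * Real.cos τ * (ε₁ / m), h * (ε₁ / m)]
          = (Real.sin τ ^ 2 + Real.cos τ ^ 2) * (X 0 * ε₁ / m) ^ 2 + (h * ε₁ / m) ^ 2 := by
        simp only [dot3, Matrix.cons_val_zero, Matrix.cons_val_one, Matrix.head_cons,
          Matrix.cons_val_two, Matrix.tail_cons]
        ring
      have hX0sq : X 0 ^ 2 = m ^ 2 * U 0 ^ 2 - h ^ 2 := by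
        rw [hX0v, mul_pow, he0sq, one_mul, hq2]
      rw [i1, hcs, one_mul]
      have e2 : (X 0 * ε₁ / m) ^ 2 + (h * ε₁ / m) ^ 2
          = (X 0 ^ 2 * ε₁ ^ 2 + h ^ 2 * ε₁ ^ 2) / m ^ 2 := by
        field_simp
      rw [e2, hX0sq, he1sq]
      field_simp
      try ring
    rw [hdot]
    exact Real.sqrt_sq hupos.le
  -- norm of the cross product
  have hnc : norm3 (cross3 (deriv (fun t' => PsiB U V k m h ε₀ ε₁ ε₂ 0 t') t)
      (iteratedDeriv (k + 1) (fun s' => PsiB U V k m h ε₀ ε₁ ε₂ s' t) 0))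
      = (k.factorial : ℝ) * U 0 := by
    rw [hv1, hv2, norm3]
    have hX0sq : X 0 ^ 2 = m ^ 2 * U 0 ^ 2 - h ^ 2 := by
      rw [hX0v, mul_pow, he0sq, one_mul, hq2]
    have ha0sq : a 0 ^ 2 = m ^ 4 * U 0 ^ 2 * V 0 ^ 2 / (m ^ 2 * U 0 ^ 2 - h ^ 2) := by
      rw [ha0v, div_pow, hq2]
      congr 1
      rw [show (ε₀ * m ^ 2 * U 0 * V 0) ^ 2 = ε₀ ^ 2 * (m ^ 4 * U 0 ^ 2 * V 0 ^ 2) by ring,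
        he0sq, one_mul]
    have hb0sq : b 0 ^ 2 = m ^ 2 * U 0 ^ 2 * ρ 0 ^ 2 / (m ^ 2 * U 0 ^ 2 - h ^ 2) ^ 2 := by
      rw [hb0v, div_pow]
      congr 1
      rw [show (ε₂ * m * U 0 * ρ 0) ^ 2 = ε₂ ^ 2 * (m ^ 2 * U 0 ^ 2 * ρ 0 ^ 2) by ring,
        he2sq, one_mul]
    have hdot : dot3 (cross3
        ![-(X 0 * Real.sin τ) * (ε₁ / m), X 0 * Real.cos τ * (ε₁ / m), h * (ε₁ / m)]
        ![(k.factorial : ℝ) * W₁ 0, (k.factorial : ℝ) * W₂ 0, (k.factorial : ℝ) * W₃ 0])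
        (cross3
        ![-(X 0 * Real.sin τ) * (ε₁ / m), X 0 * Real.cos τ * (ε₁ / m), h * (ε₁ / m)]
        ![(k.factorial : ℝ) * W₁ 0, (k.factorial : ℝ) * W₂ 0, (k.factorial : ℝ) * W₃ 0])
        = ((k.factorial : ℝ) * U 0) ^ 2 := by
      have i2 : dot3 (cross3
          ![-(X 0 * Real.sin τ) * (ε₁ / m), X 0 * Real.cos τ * (ε₁ / m), h * (ε₁ / m)]
          ![(k.factorial : ℝ) * W₁ 0, (k.factorial : ℝ) * W₂ 0, (k.factorial : ℝ) * W₃ 0])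
          (cross3
          ![-(X 0 * Real.sin τ) * (ε₁ / m), X 0 * Real.cos τ * (ε₁ / m), h * (ε₁ / m)]
          ![(k.factorial : ℝ) * W₁ 0, (k.factorial : ℝ) * W₂ 0, (k.factorial : ℝ) * W₃ 0])
          = (Real.sin τ ^ 2 + Real.cos τ ^ 2) *
              (((X 0 * (b 0 + h * c 0) - h * (X 0 * c 0)) ^ 2 + (h * a 0) ^ 2) *
                (ε₁ * (k.factorial : ℝ) / m) ^ 2)
            + (Real.sin τ ^ 2 + Real.cos τ ^ 2) ^ 2 *
              ((X 0 * a 0) ^ 2 * (ε₁ * (k.factorial : ℝ) / m) ^ 2) := by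
        simp only [cross3, dot3, Matrix.cons_val_zero, Matrix.cons_val_one, Matrix.head_cons,
          Matrix.cons_val_two, Matrix.tail_cons]
        rw [hW₁0, hW₂0, hW₃0]
        ring
      rw [i2, hcs]
      have e3 : X 0 * (b 0 + h * c 0) - h * (X 0 * c 0) = X 0 * b 0 := by ring
      rw [e3]
      have e4 : (X 0 * b 0) ^ 2 + (h * a 0) ^ 2 + (X 0 * a 0) ^ 2 = m ^ 2 * U 0 ^ 2 := by
        calc (X 0 * b 0) ^ 2 + (h * a 0) ^ 2 + (X 0 * a 0) ^ 2
            = X 0 ^ 2 * b 0 ^ 2 + a 0 ^ 2 * (h ^ 2 + X 0 ^ 2) := by ring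
          _ = (m ^ 2 * U 0 ^ 2 - h ^ 2) *
                (m ^ 2 * U 0 ^ 2 * ρ 0 ^ 2 / (m ^ 2 * U 0 ^ 2 - h ^ 2) ^ 2)
              + (m ^ 4 * U 0 ^ 2 * V 0 ^ 2 / (m ^ 2 * U 0 ^ 2 - h ^ 2)) *
                (h ^ 2 + (m ^ 2 * U 0 ^ 2 - h ^ 2)) := by rw [hX0sq, hb0sq, ha0sq]
          _ = m ^ 2 * U 0 ^ 2 * (ρ 0 ^ 2 + m ^ 4 * U 0 ^ 2 * V 0 ^ 2) /
                (m ^ 2 * U 0 ^ 2 - h ^ 2) := by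
              field_simp
              ring
          _ = m ^ 2 * U 0 ^ 2 := by rw [hsum]; field_simp
      have he1k : (ε₁ * (k.factorial : ℝ) / m) ^ 2 = (k.factorial : ℝ) ^ 2 / m ^ 2 := by
        have e5 : (ε₁ * (k.factorial : ℝ) / m) ^ 2
            = ε₁ ^ 2 * (k.factorial : ℝ) ^ 2 / m ^ 2 := by ring
        rw [e5, he1sq, one_mul]
      rw [one_mul, one_pow, one_mul]
      rw [he1k]
      have e6 : ((X 0 * b 0) ^ 2 + (h * a 0) ^ 2) * ((k.factorial : ℝ) ^ 2 / m ^ 2)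
          + (X 0 * a 0) ^ 2 * ((k.factorial : ℝ) ^ 2 / m ^ 2)
          = ((X 0 * b 0) ^ 2 + (h * a 0) ^ 2 + (X 0 * a 0) ^ 2) *
            ((k.factorial : ℝ) ^ 2 / m ^ 2) := by ring
      rw [e6, e4]
      field_simp
    rw [hdot]
    exact Real.sqrt_sq (by positivity)
  -- conclusion
  constructor
  · rw [hUk2]
    exact hdet
  · rw [hUk2, hdet, hn1, hnc]
    have hee : (2 * (k : ℝ) + 3) / ((k : ℝ) + 1) = ((k : ℝ) + 2) / ((k : ℝ) + 1) + 1 := by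
      have hk1 : ((k : ℝ) + 1) ≠ 0 := by positivity
      field_simp
      ring
    rw [hee, Real.rpow_add (by positivity), Real.rpow_one,
      Real.mul_rpow hKpos.le hupos.le]
    have hKe : (0:ℝ) < (k.factorial : ℝ) ^ (((k : ℝ) + 2) / ((k : ℝ) + 1)) :=
      Real.rpow_pos_of_pos hKpos _
    have hUe : (0:ℝ) < U 0 ^ (((k : ℝ) + 2) / ((k : ℝ) + 1)) :=
      Real.rpow_pos_of_pos hupos _
    field_simp

end
end

section
/- Let γ : I → ℝ² be a smooth curve on an open interval I satisfying the 7/2-cusp conditions at c ∈ I with constants (k, l). Let J be an open interval, φ : J → I a smooth function whose derivative is nowhere zero, and c̄ ∈ J with φ(c̄) = c. Then there exist k̄, l̄ ∈ ℝ such that γ ∘ φ satisfies the 7/2-cusp conditions at c̄ with constants (k̄, l̄); in fact one may take k̄ = k·φ'(c̄) + 3·φ''(c̄)/φ'(c̄). -/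
noncomputable section

open Real

/-- Determinant of the 2×2 matrix with columns `a`, `b`. -/
def det2 (a b : ℝ × ℝ) : ℝ := a.1 * b.2 - a.2 * b.1

/-- `Φ : W → W'` is a smooth diffeomorphism with smooth inverse `Φinv`. -/
def SmoothDiffeoOn2 (Φ Φinv : ℝ × ℝ → ℝ × ℝ) (W W' : Set (ℝ × ℝ)) : Prop :=
  ContDiffOn ℝ (⊤ : ℕ∞) Φ W ∧ ContDiffOn ℝ (⊤ : ℕ∞) Φinv W' ∧ Set.MapsTo Φ W W' ∧
    Set.MapsTo Φinv W' W ∧ (∀ p ∈ W, Φinv (Φ p) = p) ∧ (∀ p ∈ W', Φ (Φinv p) = p)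

/-- `γ` is `𝒜`-equivalent at `c` to the curve `t ↦ (t^p, t^q)`: there are an open interval
`(a,b) ∋ 0`, a smooth `φ` on `(a,b)` with `φ(0) = c` and nowhere vanishing derivative, open
sets `W ∋ γ(c)`, `W' ∋ 0`, and a smooth diffeomorphism `Φ : W → W'` with `Φ(γ(c)) = 0`,
such that `Φ(γ(φ(t))) = (t^p, t^q)` whenever `t ∈ (a,b)` and `γ(φ(t)) ∈ W`. -/
def AEquivCurveAt (γ : ℝ → ℝ × ℝ) (c : ℝ) (p q : ℕ) : Prop :=
  ∃ (a b : ℝ) (φ : ℝ → ℝ) (W W' : Set (ℝ × ℝ)) (Φ Φinv : ℝ × ℝ → ℝ × ℝ),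
    a < 0 ∧ 0 < b ∧
    ContDiffOn ℝ (⊤ : ℕ∞) φ (Set.Ioo a b) ∧ φ 0 = c ∧ (∀ t ∈ Set.Ioo a b, deriv φ t ≠ 0) ∧
    IsOpen W ∧ IsOpen W' ∧ γ c ∈ W ∧ ((0, 0) : ℝ × ℝ) ∈ W' ∧
    SmoothDiffeoOn2 Φ Φinv W W' ∧ Φ (γ c) = (0, 0) ∧
    (∀ t ∈ Set.Ioo a b, γ (φ t) ∈ W → Φ (γ (φ t)) = (t ^ p, t ^ q))

/-- `γ` satisfies the 7/2-cusp conditions at `c` with constants `(k, l)`: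
`γ'(c) = 0`, `γ''(c) ≠ 0`, `γ'''(c) = k γ''(c)`, `γ⁽⁵⁾(c) − (10/3)k γ⁽⁴⁾(c) = l γ''(c)`,
and `det(γ''(c), γ⁽⁷⁾(c) − 7k γ⁽⁶⁾(c) − (7l − (70/3)k³) γ⁽⁴⁾(c)) ≠ 0`. -/
def SevenHalfCuspCond (γ : ℝ → ℝ × ℝ) (c k l : ℝ) : Prop :=
  deriv γ c = 0 ∧ iteratedDeriv 2 γ c ≠ 0 ∧
  iteratedDeriv 3 γ c = k • iteratedDeriv 2 γ c ∧
  iteratedDeriv 5 γ c - ((10 / 3 : ℝ) * k) • iteratedDeriv 4 γ c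
    = l • iteratedDeriv 2 γ c ∧
  det2 (iteratedDeriv 2 γ c)
    (iteratedDeriv 7 γ c - (7 * k) • iteratedDeriv 6 γ c
      - (7 * l - (70 / 3 : ℝ) * k ^ 3) • iteratedDeriv 4 γ c) ≠ 0

private lemma hasDerivAt_iter {E : Type*} [NormedAddCommGroup E] [NormedSpace ℝ E]
    (f : ℝ → E) (s : Set ℝ) (hs : IsOpen s) (hf : ContDiffOn ℝ (⊤ : ℕ∞) f s) (n : ℕ) :
    ∀ x ∈ s, HasDerivAt (iteratedDeriv n f) (iteratedDeriv (n + 1) f x) x := by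
  intro x hx
  have heq : ∀ y ∈ s, iteratedDerivWithin n f s y = iteratedDeriv n f y := by
    intro y hy
    rw [iteratedDerivWithin_eq_iteratedFDerivWithin, iteratedDeriv_eq_iteratedFDeriv,
      iteratedFDerivWithin_of_isOpen n hs hy]
  have hdiff : DifferentiableOn ℝ (iteratedDerivWithin n f s) s :=
    hf.differentiableOn_iteratedDerivWithin (by exact_mod_cast lt_top_iff_ne_top.2 (by simp))
      hs.uniqueDiffOn
  have h1 : DifferentiableAt ℝ (iteratedDerivWithin n f s) x :=
    (hdiff x hx).differentiableAt (hs.mem_nhds hx)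
  have hev : iteratedDerivWithin n f s =ᶠ[nhds x] iteratedDeriv n f :=
    Filter.eventuallyEq_of_mem (hs.mem_nhds hx) heq
  have h2 : DifferentiableAt ℝ (iteratedDeriv n f) x := h1.congr_of_eventuallyEq hev.symm
  rw [iteratedDeriv_succ]
  exact h2.hasDerivAt

set_option maxHeartbeats 3000000 in
/-- Invariance of the 7/2-cusp conditions under reparametrization: if `γ` satisfies the
7/2-cusp conditions at `c` with constants `(k, l)` and `φ` is smooth with nowhere vanishing
derivative, `φ(c̄) = c`, then `γ ∘ φ` satisfies the conditions at `c̄` with some constants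
`(k̄, l̄)`, where one may take `k̄ = k φ'(c̄) + 3 φ''(c̄)/φ'(c̄)`. -/
theorem stmt15 (I : Set ℝ) (hIo : IsOpen I) (hIc : Convex ℝ I)
    (γ : ℝ → ℝ × ℝ) (hγ : ContDiffOn ℝ (⊤ : ℕ∞) γ I) (c : ℝ) (hcI : c ∈ I)
    (k l : ℝ) (hcond : SevenHalfCuspCond γ c k l)
    (J : Set ℝ) (hJo : IsOpen J) (hJc : Convex ℝ J)
    (φ : ℝ → ℝ) (hφ : ContDiffOn ℝ (⊤ : ℕ∞) φ J) (hφJI : Set.MapsTo φ J I)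
    (hφ' : ∀ t ∈ J, deriv φ t ≠ 0)
    (cb : ℝ) (hcb : cb ∈ J) (hφcb : φ cb = c) :
    ∃ kb lb : ℝ,
      SevenHalfCuspCond (γ ∘ φ) cb kb lb
      ∧ kb = k * deriv φ cb + 3 * iteratedDeriv 2 φ cb / deriv φ cb := by
  obtain ⟨hc1, hc2, hc3, hc5, hc7⟩ := hcond
  have hp : ∀ (j : ℕ), ∀ t ∈ J, HasDerivAt (iteratedDeriv j φ) (iteratedDeriv (j + 1) φ t) t :=
    fun j t ht => hasDerivAt_iter φ J hJo hφ j t ht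
  have hφd : ∀ t ∈ J, HasDerivAt φ (iteratedDeriv 1 φ t) t := by
    intro t ht
    have h := hp 0 t ht
    simpa [iteratedDeriv_zero] using h
  have hq : ∀ (j : ℕ), ∀ t ∈ J, HasDerivAt (fun s => iteratedDeriv j γ (φ s))
      (iteratedDeriv 1 φ t • iteratedDeriv (j + 1) γ (φ t)) t := by
    intro j t ht
    have h1 : HasDerivAt (iteratedDeriv j γ) (iteratedDeriv (j + 1) γ (φ t)) (φ t) :=
      hasDerivAt_iter γ I hIo hγ j (φ t) (hφJI ht)
    have h2 := HasDerivAt.scomp (𝕜 := ℝ) (𝕜' := ℝ) t h1 (hφd t ht)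
    simpa [Function.comp_def] using h2
  have step : ∀ (n : ℕ) (En En' : ℝ → ℝ × ℝ),
      (∀ t ∈ J, iteratedDeriv n (γ ∘ φ) t = En t) →
      (∀ t ∈ J, HasDerivAt En (En' t) t) →
      ∀ t ∈ J, iteratedDeriv (n + 1) (γ ∘ φ) t = En' t := by
    intro n En En' hEn hEn' t ht
    rw [iteratedDeriv_succ]
    have hev : iteratedDeriv n (γ ∘ φ) =ᶠ[nhds t] En :=
      Filter.eventuallyEq_of_mem (hJo.mem_nhds ht) hEn
    rw [Filter.EventuallyEq.deriv_eq hev, (hEn' t ht).deriv]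
  have hD1 : ∀ t ∈ J, iteratedDeriv 1 (γ ∘ φ) t
      = iteratedDeriv 1 φ t • iteratedDeriv 1 γ (φ t) := by
    intro t ht
    have h : HasDerivAt (γ ∘ φ) (iteratedDeriv 1 φ t • iteratedDeriv 1 γ (φ t)) t := by
      have := hq 0 t ht
      simpa [iteratedDeriv_zero, Function.comp_def] using this
    rw [iteratedDeriv_one, h.deriv]
  have hD2 : ∀ t ∈ J, iteratedDeriv 2 (γ ∘ φ) t = iteratedDeriv 2 φ t • iteratedDeriv 1 γ (φ t) + (iteratedDeriv 1 φ t * iteratedDeriv 1 φ t) • iteratedDeriv 2 γ (φ t) := by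
    refine step 1 _ _ hD1 ?_
    intro t ht
    exact HasDerivAt.congr_deriv ((hp 1 t ht).smul (hq 1 t ht)) (by simp only [Pi.mul_apply, Nat.reduceAdd]; module)
  have hD3 : ∀ t ∈ J, iteratedDeriv 3 (γ ∘ φ) t = iteratedDeriv 3 φ t • iteratedDeriv 1 γ (φ t) + ((3:ℝ) * (iteratedDeriv 1 φ t * iteratedDeriv 2 φ t)) • iteratedDeriv 2 γ (φ t) + (iteratedDeriv 1 φ t * iteratedDeriv 1 φ t * iteratedDeriv 1 φ t) • iteratedDeriv 3 γ (φ t) := by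
    refine step 2 _ _ hD2 ?_
    intro t ht
    exact HasDerivAt.congr_deriv (((hp 2 t ht).smul (hq 1 t ht)).add (((hp 1 t ht).mul (hp 1 t ht)).smul (hq 2 t ht))) (by simp only [Pi.mul_apply, Nat.reduceAdd]; module)
  have hD4 : ∀ t ∈ J, iteratedDeriv 4 (γ ∘ φ) t = iteratedDeriv 4 φ t • iteratedDeriv 1 γ (φ t) + ((4:ℝ) * (iteratedDeriv 1 φ t * iteratedDeriv 3 φ t)) • iteratedDeriv 2 γ (φ t) + ((3:ℝ) * (iteratedDeriv 2 φ t * iteratedDeriv 2 φ t)) • iteratedDeriv 2 γ (φ t) + ((6:ℝ) * (iteratedDeriv 1 φ t * iteratedDeriv 1 φ t * iteratedDeriv 2 φ t)) • iteratedDeriv 3 γ (φ t) + (iteratedDeriv 1 φ t * iteratedDeriv 1 φ t * iteratedDeriv 1 φ t * iteratedDeriv 1 φ t) • iteratedDeriv 4 γ (φ t) := by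
    refine step 3 _ _ hD3 ?_
    intro t ht
    exact HasDerivAt.congr_deriv ((((hp 3 t ht).smul (hq 1 t ht)).add ((HasDerivAt.const_mul ((3:ℝ)) ((hp 1 t ht).mul (hp 2 t ht))).smul (hq 2 t ht))).add ((((hp 1 t ht).mul (hp 1 t ht)).mul (hp 1 t ht)).smul (hq 3 t ht))) (by simp only [Pi.mul_apply, Nat.reduceAdd]; module)
  have hD5 : ∀ t ∈ J, iteratedDeriv 5 (γ ∘ φ) t = iteratedDeriv 5 φ t • iteratedDeriv 1 γ (φ t) + ((5:ℝ) * (iteratedDeriv 1 φ t * iteratedDeriv 4 φ t)) • iteratedDeriv 2 γ (φ t) + ((10:ℝ) * (iteratedDeriv 2 φ t * iteratedDeriv 3 φ t)) • iteratedDeriv 2 γ (φ t) + ((10:ℝ) * (iteratedDeriv 1 φ t * iteratedDeriv 1 φ t * iteratedDeriv 3 φ t)) • iteratedDeriv 3 γ (φ t) + ((15:ℝ) * (iteratedDeriv 1 φ t * iteratedDeriv 2 φ t * iteratedDeriv 2 φ t)) • iteratedDeriv 3 γ (φ t) + ((10:ℝ) * (iteratedDeriv 1 φ t * iteratedDeriv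 1 φ t * iteratedDeriv 1 φ t * iteratedDeriv 2 φ t)) • iteratedDeriv 4 γ (φ t) + (iteratedDeriv 1 φ t * iteratedDeriv 1 φ t * iteratedDeriv 1 φ t * iteratedDeriv 1 φ t * iteratedDeriv 1 φ t) • iteratedDeriv 5 γ (φ t) := by
    refine step 4 _ _ hD4 ?_
    intro t ht
    exact HasDerivAt.congr_deriv ((((((hp 4 t ht).smul (hq 1 t ht)).add ((HasDerivAt.const_mul ((4:ℝ)) ((hp 1 t ht).mul (hp 3 t ht))).smul (hq 2 t ht))).add ((HasDerivAt.const_mul ((3:ℝ)) ((hp 2 t ht).mul (hp 2 t ht))).smul (hq 2 t ht))).add ((HasDerivAt.const_mul ((6:ℝ)) (((hp 1 t ht).mul (hp 1 t ht)).mul (hp 2 t ht))).smul (hq 3 t ht))).add (((((hp 1 t ht).mul (hp 1 t ht)).mul (hp 1 t ht)).mul (hp 1 t ht)).smul (hq 4 t ht))) (by simp only [Pi.mul_apply, Nat.reduceAdd]; module)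
  have hD6 : ∀ t ∈ J, iteratedDeriv 6 (γ ∘ φ) t = iteratedDeriv 6 φ t • iteratedDeriv 1 γ (φ t) + ((6:ℝ) * (iteratedDeriv 1 φ t * iteratedDeriv 5 φ t)) • iteratedDeriv 2 γ (φ t) + ((15:ℝ) * (iteratedDeriv 2 φ t * iteratedDeriv 4 φ t)) • iteratedDeriv 2 γ (φ t) + ((10:ℝ) * (iteratedDeriv 3 φ t * iteratedDeriv 3 φ t)) • iteratedDeriv 2 γ (φ t) + ((15:ℝ) * (iteratedDeriv 1 φ t * iteratedDeriv 1 φ t * iteratedDeriv 4 φ t)) • iteratedDeriv 3 γ (φ t) + ((60:ℝ) * (iteratedDeriv 1 φ t * iteratedDeriv 2 φ t * iteratedDeriv 3 φ t)) • iteratedDeriv 3 γ (φ t) + ((15:ℝ) * (iteratedDeriv 2 φ t * iteratedDeriv 2 φ t * iteratedDeriv 2 φ t)) • iteratedDeriv 3 γ (φ t) + ((20:ℝ) * (iteratedDeriv 1 φ t * iteratedDeriv 1 φ t * iteratedDeriv 1 φ t * iteratedDeriv 3 φ t)) • iteratedDeriv 4 γ (φ t) + ((45:ℝ) * (iteratedDeriv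 1 φ t * iteratedDeriv 1 φ t * iteratedDeriv 2 φ t * iteratedDeriv 2 φ t)) • iteratedDeriv 4 γ (φ t) + ((15:ℝ) * (iteratedDeriv 1 φ t * iteratedDeriv 1 φ t * iteratedDeriv 1 φ t * iteratedDeriv 1 φ t * iteratedDeriv 2 φ t)) • iteratedDeriv 5 γ (φ t) + (iteratedDeriv 1 φ t * iteratedDeriv 1 φ t * iteratedDeriv 1 φ t * iteratedDeriv 1 φ t * iteratedDeriv 1 φ t * iteratedDeriv 1 φ t) • iteratedDeriv 6 γ (φ t) := by
    refine step 5 _ _ hD5 ?_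
    intro t ht
    exact HasDerivAt.congr_deriv ((((((((hp 5 t ht).smul (hq 1 t ht)).add ((HasDerivAt.const_mul ((5:ℝ)) ((hp 1 t ht).mul (hp 4 t ht))).smul (hq 2 t ht))).add ((HasDerivAt.const_mul ((10:ℝ)) ((hp 2 t ht).mul (hp 3 t ht))).smul (hq 2 t ht))).add ((HasDerivAt.const_mul ((10:ℝ)) (((hp 1 t ht).mul (hp 1 t ht)).mul (hp 3 t ht))).smul (hq 3 t ht))).add ((HasDerivAt.const_mul ((15:ℝ)) (((hp 1 t ht).mul (hp 2 t ht)).mul (hp 2 t ht))).smul (hq 3 t ht))).add ((HasDerivAt.const_mul ((10:ℝ)) ((((hp 1 t ht).mul (hp 1 t ht)).mul (hp 1 t ht)).mul (hp 2 t ht))).smul (hq 4 t ht))).add ((((((hp 1 t ht).mul (hp 1 t ht)).mul (hp 1 t ht)).mul (hp 1 t ht)).mul (hp 1 t ht)).smul (hq 5 t ht))) (by simp only [Pi.mul_apply, Nat.reduceAdd]; module)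
  have hD7 : ∀ t ∈ J, iteratedDeriv 7 (γ ∘ φ) t = iteratedDeriv 7 φ t • iteratedDeriv 1 γ (φ t) + ((7:ℝ) * (iteratedDeriv 1 φ t * iteratedDeriv 6 φ t)) • iteratedDeriv 2 γ (φ t) + ((21:ℝ) * (iteratedDeriv 2 φ t * iteratedDeriv 5 φ t)) • iteratedDeriv 2 γ (φ t) + ((35:ℝ) * (iteratedDeriv 3 φ t * iteratedDeriv 4 φ t)) • iteratedDeriv 2 γ (φ t) + ((21:ℝ) * (iteratedDeriv 1 φ t * iteratedDeriv 1 φ t * iteratedDeriv 5 φ t)) • iteratedDeriv 3 γ (φ t) + ((105:ℝ) * (iteratedDeriv 1 φ t * iteratedDeriv 2 φ t * iteratedDeriv 4 φ t)) • iteratedDeriv 3 γ (φ t) + ((70:ℝ) * (iteratedDeriv 1 φ t * iteratedDeriv 3 φ t * iteratedDeriv 3 φ t)) • iteratedDeriv 3 γ (φ t) + ((105:ℝ) * (iteratedDeriv 2 φ t * iteratedDeriv 2 φ t * iteratedDeriv 3 φ t)) • iteratedDeriv 3 γ (φ t) + ((35:ℝ) * (iteratedDeriv 1 φ t * iteratedDeriv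 1 φ t * iteratedDeriv 1 φ t * iteratedDeriv 4 φ t)) • iteratedDeriv 4 γ (φ t) + ((210:ℝ) * (iteratedDeriv 1 φ t * iteratedDeriv 1 φ t * iteratedDeriv 2 φ t * iteratedDeriv 3 φ t)) • iteratedDeriv 4 γ (φ t) + ((105:ℝ) * (iteratedDeriv 1 φ t * iteratedDeriv 2 φ t * iteratedDeriv 2 φ t * iteratedDeriv 2 φ t)) • iteratedDeriv 4 γ (φ t) + ((35:ℝ) * (iteratedDeriv 1 φ t * iteratedDeriv 1 φ t * iteratedDeriv 1 φ t * iteratedDeriv 1 φ t * iteratedDeriv 3 φ t)) • iteratedDeriv 5 γ (φ t) + ((105:ℝ) * (iteratedDeriv 1 φ t * iteratedDeriv 1 φ t * iteratedDeriv 1 φ t * iteratedDeriv 2 φ t * iteratedDeriv 2 φ t)) • iteratedDeriv 5 γ (φ t) + ((21:ℝ) * (iteratedDeriv 1 φ t * iteratedDeriv 1 φ t * iteratedDeriv 1 φ t * iteratedDeriv 1 φ t * iteratedDeriv 1 φ t * iteratedDeriv 2 φ t)) • iteratedDeriv 6 γ (φ t) + (iteratedDeriv 1 φ t * iteratedDeriv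 1 φ t * iteratedDeriv 1 φ t * iteratedDeriv 1 φ t * iteratedDeriv 1 φ t * iteratedDeriv 1 φ t * iteratedDeriv 1 φ t) • iteratedDeriv 7 γ (φ t) := by
    refine step 6 _ _ hD6 ?_
    intro t ht
    exact HasDerivAt.congr_deriv ((((((((((((hp 6 t ht).smul (hq 1 t ht)).add ((HasDerivAt.const_mul ((6:ℝ)) ((hp 1 t ht).mul (hp 5 t ht))).smul (hq 2 t ht))).add ((HasDerivAt.const_mul ((15:ℝ)) ((hp 2 t ht).mul (hp 4 t ht))).smul (hq 2 t ht))).add ((HasDerivAt.const_mul ((10:ℝ)) ((hp 3 t ht).mul (hp 3 t ht))).smul (hq 2 t ht))).add ((HasDerivAt.const_mul ((15:ℝ)) (((hp 1 t ht).mul (hp 1 t ht)).mul (hp 4 t ht))).smul (hq 3 t ht))).add ((HasDerivAt.const_mul ((60:ℝ)) (((hp 1 t ht).mul (hp 2 t ht)).mul (hp 3 t ht))).smul (hq 3 t ht))).add ((HasDerivAt.const_mul ((15:ℝ)) (((hp 2 t ht).mul (hp 2 t ht)).mul (hp 2 t ht))).smul (hq 3 t ht))).add ((HasDerivAt.const_mul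 ((20:ℝ)) ((((hp 1 t ht).mul (hp 1 t ht)).mul (hp 1 t ht)).mul (hp 3 t ht))).smul (hq 4 t ht))).add ((HasDerivAt.const_mul ((45:ℝ)) ((((hp 1 t ht).mul (hp 1 t ht)).mul (hp 2 t ht)).mul (hp 2 t ht))).smul (hq 4 t ht))).add ((HasDerivAt.const_mul ((15:ℝ)) (((((hp 1 t ht).mul (hp 1 t ht)).mul (hp 1 t ht)).mul (hp 1 t ht)).mul (hp 2 t ht))).smul (hq 5 t ht))).add (((((((hp 1 t ht).mul (hp 1 t ht)).mul (hp 1 t ht)).mul (hp 1 t ht)).mul (hp 1 t ht)).mul (hp 1 t ht)).smul (hq 6 t ht))) (by simp only [Pi.mul_apply, Nat.reduceAdd]; module)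
  have hA1 : iteratedDeriv 1 φ cb ≠ 0 := by rw [iteratedDeriv_one]; exact hφ' cb hcb
  have hg1 : iteratedDeriv 1 γ c = 0 := by rw [iteratedDeriv_one]; exact hc1
  have hg5 : iteratedDeriv 5 γ c
      = l • iteratedDeriv 2 γ c + ((10 / 3 : ℝ) * k) • iteratedDeriv 4 γ c :=
    sub_eq_iff_eq_add.mp hc5
  set kb : ℝ := k * deriv φ cb + 3 * iteratedDeriv 2 φ cb / deriv φ cb with hkb
  set lb : ℝ := (5 * deriv φ cb * iteratedDeriv 4 φ cb + 10 * iteratedDeriv 2 φ cb * iteratedDeriv 3 φ cb + 10 * k * deriv φ cb ^ 2 * iteratedDeriv 3 φ cb + 15 * k * deriv φ cb * iteratedDeriv 2 φ cb ^ 2 + l * deriv φ cb ^ 5 - (10 / 3 : ℝ) * kb * (4 * deriv φ cb * iteratedDeriv 3 φ cb + 3 * iteratedDeriv 2 φ cb ^ 2 + 6 * k * deriv φ cb ^ 2 * iteratedDeriv 2 φ cb)) / deriv φ cb ^ 2 with hlb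
  have hkbx : kb * deriv φ cb = k * deriv φ cb ^ 2 + 3 * iteratedDeriv 2 φ cb := by
    rw [hkb]
    field_simp [hφ' cb hcb]
  have hlbx : lb * deriv φ cb ^ 2 = 5 * deriv φ cb * iteratedDeriv 4 φ cb + 10 * iteratedDeriv 2 φ cb * iteratedDeriv 3 φ cb + 10 * k * deriv φ cb ^ 2 * iteratedDeriv 3 φ cb + 15 * k * deriv φ cb * iteratedDeriv 2 φ cb ^ 2 + l * deriv φ cb ^ 5 - (10 / 3 : ℝ) * kb * (4 * deriv φ cb * iteratedDeriv 3 φ cb + 3 * iteratedDeriv 2 φ cb ^ 2 + 6 * k * deriv φ cb ^ 2 * iteratedDeriv 2 φ cb) := by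
    rw [hlb]
    field_simp [hφ' cb hcb]
  refine ⟨kb, lb, ⟨?_, ?_, ?_, ?_, ?_⟩, hkb⟩
  · rw [← iteratedDeriv_one, hD1 cb hcb, hφcb, hg1, smul_zero]
  · rw [hD2 cb hcb, hφcb, hg1, smul_zero, zero_add]
    exact smul_ne_zero (mul_ne_zero hA1 hA1) hc2
  · rw [hD3 cb hcb, hD2 cb hcb, hφcb, hg1, hc3]
    refine Prod.ext ?_ ?_
    · simp only [Prod.fst_add, Prod.snd_add, Prod.fst_sub, Prod.snd_sub, Prod.smul_fst, Prod.smul_snd, smul_eq_mul, Prod.fst_zero, Prod.snd_zero, mul_zero]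
      simp only [iteratedDeriv_one]
      linear_combination ((-1:ℝ) * (iteratedDeriv 2 γ c).1 * deriv φ cb) * hkbx
    · simp only [Prod.fst_add, Prod.snd_add, Prod.fst_sub, Prod.snd_sub, Prod.smul_fst, Prod.smul_snd, smul_eq_mul, Prod.fst_zero, Prod.snd_zero, mul_zero]
      simp only [iteratedDeriv_one]
      linear_combination ((-1:ℝ) * (iteratedDeriv 2 γ c).2 * deriv φ cb) * hkbx
  · rw [hD5 cb hcb, hD4 cb hcb, hD2 cb hcb, hφcb, hg1, hc3, hg5]
    refine Prod.ext ?_ ?_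
    · simp only [Prod.fst_add, Prod.snd_add, Prod.fst_sub, Prod.snd_sub, Prod.smul_fst, Prod.smul_snd, smul_eq_mul, Prod.fst_zero, Prod.snd_zero, mul_zero]
      simp only [iteratedDeriv_one]
      linear_combination ((-10/3:ℝ) * (iteratedDeriv 4 γ c).1 * deriv φ cb ^ 3) * hkbx + ((-1:ℝ) * (iteratedDeriv 2 γ c).1) * hlbx
    · simp only [Prod.fst_add, Prod.snd_add, Prod.fst_sub, Prod.snd_sub, Prod.smul_fst, Prod.smul_snd, smul_eq_mul, Prod.fst_zero, Prod.snd_zero, mul_zero]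
      simp only [iteratedDeriv_one]
      linear_combination ((-10/3:ℝ) * (iteratedDeriv 4 γ c).2 * deriv φ cb ^ 3) * hkbx + ((-1:ℝ) * (iteratedDeriv 2 γ c).2) * hlbx
  · have key : det2 (iteratedDeriv 2 (γ ∘ φ) cb)
        (iteratedDeriv 7 (γ ∘ φ) cb - (7 * kb) • iteratedDeriv 6 (γ ∘ φ) cb
          - (7 * lb - (70 / 3 : ℝ) * kb ^ 3) • iteratedDeriv 4 (γ ∘ φ) cb)
        = deriv φ cb ^ 9 * det2 (iteratedDeriv 2 γ c)
          (iteratedDeriv 7 γ c - (7 * k) • iteratedDeriv 6 γ c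
            - (7 * l - (70 / 3 : ℝ) * k ^ 3) • iteratedDeriv 4 γ c) := by
      rw [hD2 cb hcb, hD4 cb hcb, hD6 cb hcb, hD7 cb hcb, hφcb, hg1, hc3, hg5]
      simp only [det2]
      simp only [Prod.fst_add, Prod.snd_add, Prod.fst_sub, Prod.snd_sub, Prod.smul_fst, Prod.smul_snd, smul_eq_mul, Prod.fst_zero, Prod.snd_zero, mul_zero]
      simp only [iteratedDeriv_one]
      linear_combination ((-70:ℝ) * iteratedDeriv 2 φ cb * (iteratedDeriv 2 γ c).1 * (iteratedDeriv 4 γ c).2 * k * deriv φ cb ^ 5 + (70:ℝ) * iteratedDeriv 2 φ cb * (iteratedDeriv 2 γ c).1 * (iteratedDeriv 4 γ c).2 * kb * deriv φ cb ^ 4 + (70:ℝ) * iteratedDeriv 2 φ cb * (iteratedDeriv 2 γ c).2 * (iteratedDeriv 4 γ c).1 * k * deriv φ cb ^ 5 + (-70:ℝ) * iteratedDeriv 2 φ cb * (iteratedDeriv 2 γ c).2 * (iteratedDeriv 4 γ c).1 * kb * deriv φ cb ^ 4 + (-35:ℝ) * iteratedDeriv 2 φ cb ^ 2 * (iteratedDeriv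 2 γ c).1 * (iteratedDeriv 4 γ c).2 * deriv φ cb ^ 3 + (35:ℝ) * iteratedDeriv 2 φ cb ^ 2 * (iteratedDeriv 2 γ c).2 * (iteratedDeriv 4 γ c).1 * deriv φ cb ^ 3 + (-140/3:ℝ) * iteratedDeriv 3 φ cb * (iteratedDeriv 2 γ c).1 * (iteratedDeriv 4 γ c).2 * deriv φ cb ^ 4 + (140/3:ℝ) * iteratedDeriv 3 φ cb * (iteratedDeriv 2 γ c).2 * (iteratedDeriv 4 γ c).1 * deriv φ cb ^ 4 + (70/3:ℝ) * (iteratedDeriv 2 γ c).1 * (iteratedDeriv 4 γ c).2 * k * kb * deriv φ cb ^ 6 + (70/3:ℝ) * (iteratedDeriv 2 γ c).1 * (iteratedDeriv 4 γ c).2 * k ^ 2 * deriv φ cb ^ 7 + (70/3:ℝ) * (iteratedDeriv 2 γ c).1 * (iteratedDeriv 4 γ c).2 * kb ^ 2 * deriv φ cb ^ 5 + (-7:ℝ) * (iteratedDeriv 2 γ c).1 * (iteratedDeriv 6 γ c).2 * deriv φ cb ^ 7 + (-70/3:ℝ) * (iteratedDeriv 2 γ c).2 * (iteratedDeriv 4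 γ c).1 * k * kb * deriv φ cb ^ 6 + (-70/3:ℝ) * (iteratedDeriv 2 γ c).2 * (iteratedDeriv 4 γ c).1 * k ^ 2 * deriv φ cb ^ 7 + (-70/3:ℝ) * (iteratedDeriv 2 γ c).2 * (iteratedDeriv 4 γ c).1 * kb ^ 2 * deriv φ cb ^ 5 + (7:ℝ) * (iteratedDeriv 2 γ c).2 * (iteratedDeriv 6 γ c).1 * deriv φ cb ^ 7) * hkbx + ((-7:ℝ) * (iteratedDeriv 2 γ c).1 * (iteratedDeriv 4 γ c).2 * deriv φ cb ^ 4 + (7:ℝ) * (iteratedDeriv 2 γ c).2 * (iteratedDeriv 4 γ c).1 * deriv φ cb ^ 4) * hlbx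
    rw [key]
    exact mul_ne_zero (pow_ne_zero _ (hφ' cb hcb)) hc7

end
end
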